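/- arXiv:2404.10132 — 7 statements merged into one kernel-verified Lean document; each statement's English description precedes it below -/
import Mathlib

section
/- Let R be a commutative ring of characteristic p, let B be a b×b matrix and C a c×c matrix over the p-typical Witt vectors W(R), and suppose that the product of Frobenius twists C₀^(p^{e-1}) ⋯ C₀^(p) · C₀ of the zeroth Witt component C₀ of C vanishes for some positive integer e. Then the only b×c matrix X over W(R) satisfying both V(X) = F^{e-1}(B) · X · F^{e-1}(C) and F(X) = 0 is X = 0, where F and V denote the Witt vector Frobenius and Verschiebung applied entrywise. -/
/-- The Witt vector Frobenius as a plain function. -/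
noncomputable def Fr (p : ℕ) [Fact p.Prime] {R : Type} [CommRing R] :
    WittVector p R → WittVector p R :=
  ⇑(WittVector.frobenius : WittVector p R →+* WittVector p R)

/-- The Witt vector Verschiebung as a plain function. -/
noncomputable def Ve (p : ℕ) [Fact p.Prime] {R : Type} [CommRing R] :
    WittVector p R → WittVector p R :=
  ⇑(WittVector.verschiebung : WittVector p R →+ WittVector p R)

/-!
Write `[A]` for the entrywise Teichmüller lift of a matrix `A` over `R`. As `F X = 0`, the
projection formula `V y · x = V (y · F x)` shows that `X` kills the image of `V`, so `X * M`
depends only on the zeroth components of `M`. Hence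
`V (X * [A^(p)]) = V (X * F [A]) = V X * [A] = F^{e-1} B * X * F^{e-1} C * [A]
  = F^{e-1} B * X * [C₀^(p^{e-1}) * A]`,
and since `V` is injective, `X * [C₀^(p^{e-1}) * A] = 0` implies `X * [A^(p)] = 0`. Peeling the
factors off the vanishing product `C₀^(p^{e-1}) ⋯ C₀` one at a time, starting from
`X * [C₀^(p^{e-1}) ⋯ C₀] = 0`, ends with `X * [1] = 0`.
-/

theorem iterate_of_prod_ofFn_iterate_mul {M F : Type*} [Monoid M] [FunLike F M M]
    [MonoidHomClass F M M] {σ : F} {D : M} {P : M → Prop} {n : ℕ}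
    (hP : ∀ A, P (σ^[n] D * A) → P (σ A)) :
    ∀ j ≤ n + 1, ∀ A, P ((List.ofFn fun i : Fin j => σ^[n - i] D).prod * A) → P (σ^[j] A) := by
  intro j
  induction j with
  | zero => simp
  | succ j ih =>
    intro hj A hA
    rw [List.ofFn_succ, List.prod_cons, mul_assoc] at hA
    have hσ : σ (List.ofFn fun i : Fin j => σ^[n - (i.succ : ℕ)] D).prod =
        (List.ofFn fun i : Fin j => σ^[n - i] D).prod := by
      rw [map_list_prod, List.map_ofFn]
      refine congrArg List.prod (congrArg List.ofFn (funext fun i => ?_))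
      have : n - (i + 1) + 1 = n - i := by omega
      rw [Function.comp_apply, Fin.val_succ, ← Function.iterate_succ_apply' σ,
        Nat.succ_eq_add_one, this]
    have hσA := hP _ hA
    rw [map_mul, hσ] at hσA
    simpa only [Function.iterate_succ_apply] using ih (by omega) (σ A) hσA

theorem RingHom.mapMatrix_iterate {α m : Type*} [Fintype m] [DecidableEq m] [Semiring α]
    (f : α →+* α) (k : ℕ) (M : Matrix m m α) : f.mapMatrix^[k] M = M.map f^[k] := by
  induction k with
  | zero => simp
  | succ k ih =>
    rw [Function.iterate_succ_apply', ih, Function.iterate_succ']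
    simp [Matrix.map_map]

namespace WittVector

variable {p : ℕ} [Fact p.Prime] {R : Type*} [CommRing R]

local notation "𝕎" => WittVector p

theorem mul_eq_zero_of_frobenius_eq_zero {x y : 𝕎 R} (hx : frobenius x = 0)
    (hy : constantCoeff y = 0) : x * y = 0 := by
  rw [eq_iterate_verschiebung (n := 1) (x := y) (by simpa using hy), Function.iterate_one,
    mul_comm, ← verschiebung_mul_frobenius, hx, mul_zero, map_zero]

theorem mul_eq_mul_of_frobenius_eq_zero {x y z : 𝕎 R} (hx : frobenius x = 0)
    (h : constantCoeff y = constantCoeff z) : x * y = x * z :=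
  sub_eq_zero.mp <| by
    rw [← mul_sub]
    exact mul_eq_zero_of_frobenius_eq_zero hx (by rw [map_sub, h, sub_self])

theorem frobenius_teichmuller [CharP R p] (a : R) :
    frobenius (teichmuller p a) = teichmuller p (a ^ p) := by
  rw [frobenius_eq_map_frobenius, map_teichmuller, frobenius_def]

end WittVector

namespace Matrix

open WittVector

variable {p : ℕ} [Fact p.Prime] {R : Type*} [CommRing R] {l m n : Type*} [Fintype m]

local notation "𝕎" => WittVector p

theorem map_verschiebung_mul_map_frobenius (M : Matrix l m (𝕎 R)) (N : Matrix m n (𝕎 R)) :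
    (M * N.map (frobenius : 𝕎 R →+* 𝕎 R)).map verschiebung = M.map verschiebung * N := by
  ext i j
  simp [mul_apply, map_sum, verschiebung_mul_frobenius]

theorem mul_eq_mul_of_map_frobenius_eq_zero {X : Matrix l m (𝕎 R)}
    (hX : X.map (frobenius : 𝕎 R →+* 𝕎 R) = 0) {M N : Matrix m n (𝕎 R)} (h : M.map constantCoeff = N.map constantCoeff) :
    X * M = X * N :=
  ext fun i j => Finset.sum_congr rfl fun k _ => mul_eq_mul_of_frobenius_eq_zero
    (congrFun (congrFun hX i) k) (congrFun (congrFun h k) j)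

variable [CharP R p] [Fintype l] [Fintype n]

theorem mul_map_teichmuller_map_frobenius_eq_zero {B : Matrix l l (𝕎 R)} {C : Matrix n n (𝕎 R)}
    {X : Matrix l n (𝕎 R)} {k : ℕ}
    (hV : X.map verschiebung = B * X * C.map (frobenius : 𝕎 R →+* 𝕎 R)^[k])
    (hF : X.map (frobenius : 𝕎 R →+* 𝕎 R) = 0) {A : Matrix n n R}
    (hA : X * ((C.map constantCoeff).map (_root_.frobenius R p)^[k] * A).map (teichmuller p) = 0) :
    X * (A.map (_root_.frobenius R p)).map (teichmuller p) = 0 := by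
  have hT : (A.map (_root_.frobenius R p)).map (teichmuller p) =
      (A.map (teichmuller p)).map frobenius := by
    ext i j
    simp [frobenius_teichmuller, frobenius_def]
  have hCA : X * (C.map frobenius^[k] * A.map (teichmuller p)) =
      X * ((C.map constantCoeff).map (_root_.frobenius R p)^[k] * A).map (teichmuller p) := by
    refine mul_eq_mul_of_map_frobenius_eq_zero hF ?_
    ext i j
    simp [mul_apply, mul_coeff_zero, iterate_frobenius_coeff, iterate_frobenius]
  apply map_injective (verschiebung_injective p R)
  beta_reduce
  rw [hT, map_verschiebung_mul_map_frobenius, hV, Matrix.mul_assoc, Matrix.mul_assoc, hCA, hA]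
  simp

end Matrix

theorem statement_0_general (p : ℕ) [Fact p.Prime] (R : Type) [CommRing R] [CharP R p]
    (b c e : ℕ)
    (B : Matrix (Fin b) (Fin b) (WittVector p R))
    (C : Matrix (Fin c) (Fin c) (WittVector p R))
    (hC : (List.ofFn fun i : Fin e =>
        C.map fun x => (x.coeff 0) ^ p ^ (e - 1 - (i : ℕ))).prod = 0)
    (X : Matrix (Fin b) (Fin c) (WittVector p R))
    (h1 : X.map (Ve p) = (B.map ((Fr p)^[e - 1])) * X * (C.map ((Fr p)^[e - 1])))
    (h2 : X.map (Fr p) = 0) :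
    X = 0 := by
  have hD : ∀ k, (frobenius R p).mapMatrix^[k] (C.map WittVector.constantCoeff) =
      C.map fun x => x.coeff 0 ^ p ^ k := fun k => by
    ext
    simp [RingHom.mapMatrix_iterate, iterate_frobenius]
  have hX := iterate_of_prod_ofFn_iterate_mul (σ := (frobenius R p).mapMatrix)
    (D := C.map WittVector.constantCoeff) (P := fun A => X * A.map (WittVector.teichmuller p) = 0)
    (fun A hA => Matrix.mul_map_teichmuller_map_frobenius_eq_zero h1 h2
      (by simpa [RingHom.mapMatrix_iterate] using hA))
    e (by omega) 1 (by simp [hD, hC])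
  simpa using hX

theorem statement_0 (p : ℕ) [Fact p.Prime] (R : Type) [CommRing R] [CharP R p]
    (b c e : ℕ) (he : 0 < e)
    (B : Matrix (Fin b) (Fin b) (WittVector p R))
    (C : Matrix (Fin c) (Fin c) (WittVector p R))
    (hC : (List.ofFn fun i : Fin e =>
        C.map fun x => (x.coeff 0) ^ p ^ (e - 1 - (i : ℕ))).prod = 0)
    (X : Matrix (Fin b) (Fin c) (WittVector p R))
    (h1 : X.map (Ve p) = (B.map ((Fr p)^[e - 1])) * X * (C.map ((Fr p)^[e - 1])))
    (h2 : X.map (Fr p) = 0) :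
    X = 0 :=
  statement_0_general p R b c e B C hC X h1 h2
end

section
/- Let R be any commutative ring. Then there exists a faithfully flat ring homomorphism R → S such that S/pS is a semiperfect F_p-algebra (i.e. the Frobenius endomorphism of S/pS is surjective). -/
/-!
Adjoin to `R` a variable `X_r` for every `r ∈ R`, together with all its rational powers, and
impose `X_r = r`. Splitting an exponent vector into integer and fractional parts shows that the
resulting ring is a free `R`-module on the monomials whose exponents all lie in `[0, 1)`, so it
is faithfully flat. Modulo `p` it is semiperfect: every element is a sum of monomials
(`t X^μ = X^(μ + e_t)`), every monomial is a `p`-th power, and `x ↦ x ^ p` is additive once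
`p = 0`.
-/

open AddMonoidAlgebra

noncomputable section

namespace SemiperfectCover

def fract (q : ℚ≥0) : ℚ≥0 := q - ⌊q⌋₊

lemma fract_zero : fract 0 = 0 := by simp [fract]

lemma floor_add_fract (q : ℚ≥0) : (⌊q⌋₊ : ℚ≥0) + fract q = q :=
  add_tsub_cancel_of_le (Nat.floor_le zero_le)

lemma fract_lt_one (q : ℚ≥0) : fract q < 1 :=
  (tsub_lt_iff_left (Nat.floor_le zero_le)).2 (Nat.lt_floor_add_one q)

lemma fract_add_one (q : ℚ≥0) : fract (q + 1) = fract q := by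
  simp only [fract, Nat.floor_add_one zero_le, Nat.cast_add, Nat.cast_one]
  rw [add_comm (⌊q⌋₊ : ℚ≥0), ← tsub_tsub, add_tsub_cancel_right]

lemma fract_eq_self {q : ℚ≥0} (h : q < 1) : fract q = q := by
  simp [fract, Nat.floor_eq_zero.2 h]

section Exponent

variable (R : Type*)

abbrev Exponent := R →₀ ℚ≥0

abbrev FracExponent := {μ : Exponent R // ∀ r, μ r < 1}

instance : Nonempty (FracExponent R) := ⟨⟨0, fun _ => zero_lt_one⟩⟩

variable {R}

def intPart (μ : Exponent R) : R →₀ ℕ := μ.mapRange (⌊·⌋₊) Nat.floor_zero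

def fracPart (μ : Exponent R) : FracExponent R :=
  ⟨μ.mapRange fract fract_zero, fun _ => fract_lt_one _⟩

lemma natCast_intPart_add_fracPart (μ : Exponent R) :
    Finsupp.mapRange.addMonoidHom (Nat.castAddMonoidHom ℚ≥0) (intPart μ) + (fracPart μ).1 =
      μ :=
  Finsupp.ext fun r => floor_add_fract (μ r)

lemma intPart_add_single_one (μ : Exponent R) (r : R) :
    intPart (μ + Finsupp.single r 1) = intPart μ + Finsupp.single r 1 := by
  classical
  ext s
  simp only [intPart, Finsupp.mapRange_apply, Finsupp.add_apply, Finsupp.single_apply]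
  split_ifs
  · exact Nat.floor_add_one zero_le
  · simp

lemma fracPart_add_single_one (μ : Exponent R) (r : R) :
    fracPart (μ + Finsupp.single r 1) = fracPart μ := by
  classical
  refine Subtype.ext <| Finsupp.ext fun s => ?_
  simp only [fracPart, Finsupp.mapRange_apply, Finsupp.add_apply, Finsupp.single_apply]
  split_ifs
  · exact fract_add_one _
  · simp

lemma fracPart_val (φ : FracExponent R) : fracPart φ.1 = φ :=
  Subtype.ext (Finsupp.ext fun r => fract_eq_self (φ.2 r))

lemma intPart_val (φ : FracExponent R) : intPart φ.1 = 0 :=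
  Finsupp.ext fun r => Nat.floor_eq_zero.2 (φ.2 r)

def coeff [CommMonoid R] (μ : Exponent R) : R := (intPart μ).prod (· ^ ·)

lemma coeff_add_single_one [CommMonoid R] (μ : Exponent R) (r : R) :
    coeff (μ + Finsupp.single r 1) = coeff μ * r := by
  rw [coeff, intPart_add_single_one,
    Finsupp.prod_add_index' (fun _ => pow_zero _) (fun _ _ _ => pow_add _ _ _),
    Finsupp.prod_single_index (pow_zero r), pow_one, coeff]

lemma coeff_val [CommMonoid R] (φ : FracExponent R) : coeff φ.1 = 1 := by
  rw [coeff, intPart_val, Finsupp.prod_zero_index]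

end Exponent

variable (R : Type*) [CommRing R]

abbrev RootPolynomial := AddMonoidAlgebra R (Exponent R)

def relations : Ideal (RootPolynomial R) :=
  Ideal.span (Set.range fun r : R => single (Finsupp.single r 1) 1 - single 0 r)

abbrev Cover := RootPolynomial R ⧸ relations R

def mk : RootPolynomial R →ₐ[R] Cover R := Ideal.Quotient.mkₐ R (relations R)

lemma mk_surjective : Function.Surjective (mk R) := Ideal.Quotient.mkₐ_surjective R _

variable {R}

def X (μ : Exponent R) : Cover R := mk R (single μ 1)

lemma X_zero : X (0 : Exponent R) = 1 := map_one (mk R)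

lemma X_add (μ ν : Exponent R) : X (μ + ν) = X μ * X ν := by
  rw [X, X, X, ← map_mul, single_mul_single, one_mul]

lemma X_nsmul (n : ℕ) (μ : Exponent R) : X (n • μ) = X μ ^ n := by
  rw [X, X, ← map_pow, single_pow, one_pow]

lemma X_single_one (r : R) : X (Finsupp.single r 1) = algebraMap R (Cover R) r := by
  rw [X, ← (mk R).commutes r, mk, Ideal.Quotient.mkₐ_eq_mk, Ideal.Quotient.eq]
  exact Ideal.subset_span ⟨r, rfl⟩

lemma mk_single (μ : Exponent R) (t : R) : mk R (single μ t) = t • X μ := by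
  rw [X, ← map_smul, smul_single', mul_one]

lemma mk_single_eq_X (μ : Exponent R) (t : R) :
    mk R (single μ t) = X (Finsupp.single t 1 + μ) := by
  rw [mk_single, X_add, X_single_one, Algebra.smul_def t (X μ)]

lemma X_natCast (ν : R →₀ ℕ) :
    X (Finsupp.mapRange.addMonoidHom (Nat.castAddMonoidHom ℚ≥0) ν) =
      algebraMap R (Cover R) (ν.prod (· ^ ·)) := by
  induction ν using Finsupp.induction with
  | zero => rw [map_zero, X_zero, Finsupp.prod_zero_index, map_one]
  | single_add r n ν _ _ ih =>
    rw [map_add, X_add, ih,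
      Finsupp.prod_add_index' (fun _ => pow_zero _) (fun _ _ _ => pow_add _ _ _),
      Finsupp.prod_single_index (pow_zero r), map_mul, map_pow,
      Finsupp.mapRange.addMonoidHom_apply, Finsupp.mapRange_single, Nat.coe_castAddMonoidHom,
      ← nsmul_one, ← Finsupp.smul_single, X_nsmul, X_single_one]

lemma X_eq_coeff_smul (μ : Exponent R) : X μ = coeff μ • X (fracPart μ).1 := by
  conv_lhs => rw [← natCast_intPart_add_fracPart μ]
  rw [X_add, X_natCast, ← Algebra.smul_def]
  rfl

variable (R)

def incl : (FracExponent R →₀ R) →ₗ[R] RootPolynomial R :=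
  Finsupp.linearCombination R fun φ => single φ.1 1

def reduce : RootPolynomial R →ₗ[R] (FracExponent R →₀ R) :=
  (AddMonoidAlgebra.basis (Exponent R) R).constr R fun μ =>
    Finsupp.single (fracPart μ) (coeff μ)

def toCover : (FracExponent R →₀ R) →ₗ[R] Cover R := (mk R).toLinearMap ∘ₗ incl R

variable {R}

lemma reduce_single_one (μ : Exponent R) :
    reduce R (single μ 1) = Finsupp.single (fracPart μ) (coeff μ) := by
  rw [reduce, ← basis_apply, Module.Basis.constr_basis]

lemma reduce_single (μ : Exponent R) (t : R) :
    reduce R (single μ t) = Finsupp.single (fracPart μ) (t * coeff μ) := by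
  rw [← mul_one t, ← smul_single', map_smul, reduce_single_one, Finsupp.smul_single,
    smul_eq_mul, mul_one]

lemma reduce_mul_single_one (a : RootPolynomial R) (r : R) :
    reduce R (a * single (Finsupp.single r 1) 1) = r • reduce R a := by
  have : reduce R ∘ₗ LinearMap.mulRight R (single (Finsupp.single r 1) 1) = r • reduce R :=
    (AddMonoidAlgebra.basis (Exponent R) R).ext fun μ => by
      simp only [LinearMap.comp_apply, LinearMap.mulRight_apply, LinearMap.smul_apply, basis_apply,
        single_mul_single, one_mul, reduce_single_one, fracPart_add_single_one,
        coeff_add_single_one, Finsupp.smul_single, smul_eq_mul, mul_comm r]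
  exact LinearMap.congr_fun this a

lemma reduce_eq_zero_of_mem {x : RootPolynomial R} (hx : x ∈ relations R) : reduce R x = 0 := by
  -- `reduce` is only `R`-linear, so induct over the ideal span with an arbitrary multiplier.
  suffices ∀ a, reduce R (a * x) = 0 by simpa using this 1
  induction hx using Submodule.span_induction with
  | mem g hg =>
    obtain ⟨r, rfl⟩ := hg
    intro a
    have : a * single 0 r = r • a := (Algebra.commutes r a).symm.trans (Algebra.smul_def r a).symm
    rw [mul_sub, map_sub, reduce_mul_single_one, this, map_smul, sub_self]
  | zero => simp
  | add x y _ _ hx hy => exact fun a => by rw [mul_add, map_add, hx, hy, add_zero]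
  | smul c x _ hx => exact fun a => by rw [smul_eq_mul, ← mul_assoc, hx]

lemma reduce_incl : reduce R ∘ₗ incl R = LinearMap.id :=
  Finsupp.lhom_ext fun φ t => by
    simp [incl, reduce_single, fracPart_val, coeff_val]

lemma toCover_single (φ : FracExponent R) (t : R) :
    toCover R (Finsupp.single φ t) = t • X φ.1 := by
  rw [toCover, LinearMap.comp_apply, incl, Finsupp.linearCombination_single,
    AlgHom.toLinearMap_apply, map_smul, X]

lemma toCover_comp_reduce : toCover R ∘ₗ reduce R = (mk R).toLinearMap :=
  (AddMonoidAlgebra.basis (Exponent R) R).ext fun μ => by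
    rw [LinearMap.comp_apply, basis_apply, reduce_single_one, toCover_single,
      AlgHom.toLinearMap_apply, ← X, X_eq_coeff_smul μ]

lemma toCover_bijective : Function.Bijective (toCover R) := by
  refine ⟨(injective_iff_map_eq_zero _).2 fun x hx => ?_, fun z => ?_⟩
  · have hmem : incl R x ∈ relations R := Ideal.Quotient.eq_zero_iff_mem.1 hx
    simpa [← LinearMap.comp_apply, reduce_incl] using reduce_eq_zero_of_mem hmem
  · obtain ⟨a, rfl⟩ := mk_surjective R z
    exact ⟨reduce R a, LinearMap.congr_fun toCover_comp_reduce a⟩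

instance : Module.FaithfullyFlat R (Cover R) :=
  .of_linearEquiv _ _ (LinearEquiv.ofBijective (toCover R) toCover_bijective).symm

lemma X_mem_closure_range_pow {n : ℕ} (hn : n ≠ 0) (μ : Exponent R) :
    X μ ∈ AddSubmonoid.closure (Set.range fun y : Cover R => y ^ n) := by
  refine AddSubmonoid.subset_closure ⟨X ((n : ℚ≥0)⁻¹ • μ), ?_⟩
  show X _ ^ n = X μ
  rw [← X_nsmul, ← Nat.cast_smul_eq_nsmul ℚ≥0, smul_smul,
    mul_inv_cancel₀ (by exact_mod_cast hn), one_smul]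

variable (R) in
lemma closure_range_pow_eq_top {n : ℕ} (hn : n ≠ 0) :
    AddSubmonoid.closure (Set.range fun y : Cover R => y ^ n) = ⊤ := by
  refine (AddSubmonoid.eq_top_iff' _).2 fun z => ?_
  obtain ⟨a, rfl⟩ := mk_surjective R z
  induction a using AddMonoidAlgebra.induction_linear with
  | zero => exact map_zero (mk R) ▸ zero_mem _
  | add a b ha hb => exact map_add (mk R) a b ▸ add_mem ha hb
  | single μ t => exact mk_single_eq_X μ t ▸ X_mem_closure_range_pow hn _

end SemiperfectCover

lemma pow_surjective_of_closure_range_pow_eq_top {T T' : Type*} [CommRing T] [CommRing T']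
    (f : T →+* T') (hf : Function.Surjective f) {p : ℕ} (hp : p.Prime) (hpT' : (p : T') = 0)
    (h : AddSubmonoid.closure (Set.range fun x : T => x ^ p) = ⊤) :
    Function.Surjective fun y : T' => y ^ p := by
  rcases subsingleton_or_nontrivial T' with _ | _
  · exact fun y => ⟨y, Subsingleton.elim _ _⟩
  have : Fact p.Prime := ⟨hp⟩
  have : CharP T' p := (CharP.charP_iff_prime_eq_zero hp).2 hpT'
  have hle : AddSubmonoid.closure (Set.range fun x : T => x ^ p) ≤
      (frobenius T' p).rangeS.toAddSubmonoid.comap f.toAddMonoidHom :=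
    AddSubmonoid.closure_le.2 (by rintro _ ⟨x, rfl⟩; exact ⟨f x, (map_pow f x p).symm⟩)
  intro y
  obtain ⟨x, rfl⟩ := hf y
  exact hle (h ▸ AddSubmonoid.mem_top x)

theorem statement_3 (p : ℕ) [Fact p.Prime] (R : Type) [CommRing R] :
    ∃ (S : Type) (_ : CommRing S) (f : R →+* S),
      (letI := f.toAlgebra; Module.Flat R S) ∧
      Function.Surjective (PrimeSpectrum.comap f) ∧
      Function.Surjective (fun x : S ⧸ Ideal.span {(p : S)} => x ^ p) := by
  open SemiperfectCover in
  have hp : p.Prime := Fact.out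
  have hpzero : (p : Cover R ⧸ Ideal.span {(p : Cover R)}) = 0 := by
    simpa using Ideal.Quotient.eq_zero_iff_mem.2 (Ideal.mem_span_singleton_self (p : Cover R))
  refine ⟨Cover R, inferInstance, algebraMap R (Cover R), ?_,
    PrimeSpectrum.comap_surjective_of_faithfullyFlat,
    pow_surjective_of_closure_range_pow_eq_top _ Ideal.Quotient.mk_surjective hp hpzero
      (closure_range_pow_eq_top R hp.ne_zero)⟩
  rw [toAlgebra_algebraMap]
  infer_instance
end
end

section
/- Let R be an F_p-algebra such that the Frobenius on R is surjective (R is semiperfect). Then the Witt vector Frobenius F : W(R) → W(R) is surjective, the augmentation ideal I_R = ker(W(R) → R) equals p·W(R), and consequently W(R)/p^n W(R) is isomorphic to the ring W_n(R) of n-truncated Witt vectors. -/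
/-!
The Witt vector Frobenius of an `𝔽_p`-algebra raises every coefficient to the `p`-th power, so it
is surjective as soon as `x ↦ x ^ p` is. A Witt vector whose first `n` coefficients vanish is
`Vⁿ z`; writing `z = Fⁿ y` gives `Vⁿ (Fⁿ y) = pⁿ y`. Hence the kernel of truncation to length `n`
is `(pⁿ)`, and the quotient by it is `Wₙ(R)`.
-/

namespace WittVector

variable {p : ℕ} [Fact p.Prime] {R : Type*} [CommRing R] [CharP R p]

theorem frobenius_surjective_of_surjective (h : Function.Surjective (_root_.frobenius R p)) :
    Function.Surjective (frobenius : WittVector p R → WittVector p R) := by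
  rw [frobenius_eq_map_frobenius]
  exact map_surjective _ h

theorem mem_span_p_pow_iff_coeff_eq_zero_of_surjective
    (h : Function.Surjective (_root_.frobenius R p)) (x : WittVector p R) (n : ℕ) :
    x ∈ Ideal.span {(p : WittVector p R) ^ n} ↔ ∀ m < n, x.coeff m = 0 := by
  rw [Ideal.mem_span_singleton]
  constructor
  · rintro ⟨u, rfl⟩ m hm
    rw [mul_comm]
    exact mul_pow_charP_coeff_zero u hm
  · intro hx
    obtain ⟨y, hy⟩ := (frobenius_surjective_of_surjective h).iterate n (x.shift n)
    refine ⟨y, ?_⟩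
    rw [mul_comm, ← iterate_verschiebung_iterate_frobenius, hy]
    exact eq_iterate_verschiebung hx

theorem ker_truncate_eq_span_p_pow_of_surjective (h : Function.Surjective (_root_.frobenius R p))
    (n : ℕ) : RingHom.ker (truncate n : WittVector p R →+* TruncatedWittVector p n R) =
      Ideal.span {(p : WittVector p R) ^ n} := by
  ext x
  rw [mem_ker_truncate, mem_span_p_pow_iff_coeff_eq_zero_of_surjective h]

end WittVector

theorem statement_4 (p : ℕ) [Fact p.Prime] (R : Type) [CommRing R] [CharP R p]
    (hsp : Function.Surjective (fun x : R => x ^ p)) (n : ℕ) :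
    Function.Surjective ⇑(WittVector.frobenius : WittVector p R →+* WittVector p R) ∧
    (∀ x : WittVector p R, x.coeff 0 = 0 ↔ ∃ y, x = p * y) ∧
    RingHom.ker (WittVector.truncate n : WittVector p R →+* TruncatedWittVector p n R) =
      Ideal.span {(p : WittVector p R) ^ n} ∧
    Nonempty ((WittVector p R ⧸ Ideal.span {(p : WittVector p R) ^ n}) ≃+*
      TruncatedWittVector p n R) := by
  have hker := WittVector.ker_truncate_eq_span_p_pow_of_surjective hsp n
  refine ⟨WittVector.frobenius_surjective_of_surjective hsp, fun x => ?_, hker,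
    ⟨(Ideal.quotEquivOfEq hker.symm).trans
      (RingHom.quotientKerEquivOfSurjective (WittVector.truncate_surjective p n R))⟩⟩
  rw [← dvd_def, ← Ideal.mem_span_singleton, ← pow_one (p : WittVector p R),
    WittVector.mem_span_p_pow_iff_coeff_eq_zero_of_surjective hsp]
  simp only [Nat.lt_one_iff, forall_eq]
end

section
/- Let R be a p-nilpotent ring (p^N = 0 in R for some N). Then the ring of F-invariants W(R)^{F = id} of the p-typical Witt vectors is naturally isomorphic to the ring of continuous (locally constant on quasi-compact opens) functions from the topological space Spec(R) to Z_p. -/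
/-!
Over a ring `S` of characteristic `p`, a Witt vector is fixed by `F` iff each of its coefficients
satisfies `a ^ p = a`. At a point `𝔭` of `Spec S` such a coefficient lands in `𝔽_p ⊆ κ(𝔭)`, so an
`F`-fixed vector specializes to an element of `W(𝔽_p) = ℤ_p`. The coefficient functions
`Spec S → 𝔽_p` obtained this way are locally constant, and every locally constant function arises,
as `∑ i • e_i` for idempotents `e_i` cutting out its fibres; since `a ^ p = a` forces a nilpotent
`a` to vanish, this gives `W(S)^{F=1} ≃ C(Spec S, ℤ_p)`.

For `R` with `p` nilpotent, reduction modulo `I = (p)` is bijective on `F`-fixed points: `F` moves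
`W(I^k)` into `W(I^(k+1))`, so `F^N` kills `W(I)`. Hence a fixed point in `W(I)` vanishes, and a
lift `x` of a fixed point becomes fixed after adding `∑_{k<N} F^k (F x - x)`. Finally
`Spec (R/I) ≃ Spec R`.
-/

universe u

open Filter Topology MvPolynomial

theorem MvPolynomial.aeval_mem_of_constantCoeff_eq_zero {σ R : Type*} [CommRing R]
    {φ : MvPolynomial σ ℤ} (hφ : constantCoeff φ = 0) {I : Ideal R} {c : σ → R}
    (hc : ∀ i, c i ∈ I) : aeval c φ ∈ I := by
  classical
  have hφX : φ ∈ Ideal.span (X '' Set.univ) := by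
    rw [mem_ideal_span_X_image]
    intro m hm
    by_contra! h
    obtain rfl : m = 0 := Finsupp.ext fun i => h i (Set.mem_univ i)
    exact mem_support_iff.mp hm (by rwa [← constantCoeff_eq])
  have hle : Ideal.map (aeval (R := ℤ) c) (Ideal.span (X '' Set.univ)) ≤ I := by
    rw [Ideal.map_span (aeval (R := ℤ) c), Ideal.span_le]
    rintro _ ⟨_, ⟨i, -, rfl⟩, rfl⟩
    simpa using hc i
  exact hle (Ideal.mem_map_of_mem _ hφX)

theorem IsLocallyConstant.of_isClosed_preimage_singleton {X Y : Type*} [TopologicalSpace X]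
    [Finite Y] {f : X → Y} (h : ∀ y, IsClosed (f ⁻¹' {y})) : IsLocallyConstant f := by
  intro s
  rw [← compl_compl s, Set.preimage_compl, isOpen_compl_iff, ← Set.biUnion_preimage_singleton]
  exact (Set.toFinite _).isClosed_biUnion fun y _ => h y

theorem eq_zero_of_pow_eq_self_of_isNilpotent {R : Type*} [CommRing R] {n : ℕ} (hn : 1 < n)
    {a : R} (ha : a ^ n = a) (hnil : IsNilpotent a) : a = 0 := by
  have h : a * (1 - a ^ (n - 1)) = 0 := by
    rw [mul_sub, mul_one, ← pow_succ', Nat.sub_add_cancel hn.le, ha, sub_self]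
  exact (hnil.pow_of_pos (by omega)).isUnit_one_sub.mul_left_eq_zero.mp h

namespace PadicInt

variable {p : ℕ} [hp : Fact p.Prime]

theorem toZModPow_eq_iff_norm_sub_le {k : ℕ} {a b : ℤ_[p]} :
    toZModPow k a = toZModPow k b ↔ ‖a - b‖ ≤ (p : ℝ) ^ (-(k : ℤ)) := by
  rw [norm_le_pow_iff_mem_span_pow, ← ker_toZModPow, RingHom.mem_ker, map_sub, sub_eq_zero]

theorem continuous_iff_eventually_toZModPow_eq {X : Type*} [TopologicalSpace X]
    {f : X → ℤ_[p]} :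
    Continuous f ↔ ∀ x k, ∀ᶠ y in 𝓝 x, toZModPow k (f y) = toZModPow k (f x) := by
  simp_rw [Metric.continuous_iff', dist_eq_norm]
  refine forall_congr' fun x => ⟨fun h k => ?_, fun h ε hε => ?_⟩
  · filter_upwards [h _ (zpow_pos (Nat.cast_pos.mpr hp.out.pos) (-(k : ℤ)))] with y hy
    exact toZModPow_eq_iff_norm_sub_le.mpr hy.le
  · obtain ⟨k, hk⟩ := exists_pow_neg_lt p hε
    filter_upwards [h k] with y hy
    exact (toZModPow_eq_iff_norm_sub_le.mp hy).trans_lt hk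

end PadicInt

namespace PrimeSpectrum

variable {S : Type*} [CommRing S]

theorem algebraMap_residueField_of_isIdempotentElem {e : S} (he : IsIdempotentElem e)
    (𝔭 : PrimeSpectrum S) [Decidable (𝔭 ∈ basicOpen e)] :
    algebraMap S 𝔭.asIdeal.ResidueField e = if 𝔭 ∈ basicOpen e then 1 else 0 := by
  split_ifs with h
  · exact (IsIdempotentElem.iff_eq_zero_or_one.mp (he.map _)).resolve_left
      (mt Ideal.algebraMap_residueField_eq_zero.mp h)
  · exact Ideal.algebraMap_residueField_eq_zero.mpr (not_not.mp (mt (mem_basicOpen _ _).mpr h))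

variable {p : ℕ} [CharP S p]

theorem _root_.RingHom.map_castHom {K : Type*} [CommRing K] [CharP K p] (f : S →+* K)
    (i : ZMod p) : f (ZMod.castHom dvd_rfl S i) = ZMod.castHom dvd_rfl K i :=
  RingHom.congr_fun (RingHom.ext_zmod (f.comp (ZMod.castHom dvd_rfl S)) _) i

variable [hp : Fact p.Prime]

instance (𝔭 : PrimeSpectrum S) : CharP 𝔭.asIdeal.ResidueField p :=
  ((algebraMap S _).comp (ZMod.castHom dvd_rfl S)).charP_iff_charP p |>.mp inferInstance

theorem isLocallyConstant_of_castHom_eq {a : S} {c : PrimeSpectrum S → ZMod p}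
    (hc : ∀ 𝔭, ZMod.castHom dvd_rfl _ (c 𝔭) = algebraMap S 𝔭.asIdeal.ResidueField a) :
    IsLocallyConstant c := by
  refine IsLocallyConstant.of_isClosed_preimage_singleton fun i => ?_
  convert isClosed_zeroLocus {a - ZMod.castHom dvd_rfl S i}
  ext 𝔭
  rw [Set.mem_preimage, Set.mem_singleton_iff, mem_zeroLocus, Set.singleton_subset_iff,
    SetLike.mem_coe, ← Ideal.algebraMap_residueField_eq_zero, map_sub, RingHom.map_castHom,
    ← hc, sub_eq_zero, (ZMod.castHom dvd_rfl _).injective.eq_iff]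

theorem exists_pow_eq_self_of_isLocallyConstant {c : PrimeSpectrum S → ZMod p}
    (hc : IsLocallyConstant c) :
    ∃ a : S, a ^ p = a ∧
      ∀ 𝔭, ZMod.castHom dvd_rfl _ (c 𝔭) = algebraMap S 𝔭.asIdeal.ResidueField a := by
  classical
  choose e he hbasic using fun i =>
    exists_idempotent_basicOpen_eq_of_isClopen (hc.isClopen_fiber i)
  refine ⟨∑ i, ZMod.castHom dvd_rfl S i * e i, ?_, fun 𝔭 => ?_⟩
  · rw [sum_pow_char]
    refine Finset.sum_congr rfl fun i _ => ?_
    rw [mul_pow, ← map_pow, ZMod.pow_card, (he i).pow_eq hp.out.ne_zero]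
  · have hfiber (i) : 𝔭 ∈ basicOpen (e i) ↔ c 𝔭 = i := by
      rw [← SetLike.mem_coe, ← hbasic i]; rfl
    simp_rw [map_sum, map_mul, RingHom.map_castHom,
      algebraMap_residueField_of_isIdempotentElem (he _), hfiber, mul_ite, mul_one, mul_zero,
      Finset.sum_ite_eq, Finset.mem_univ, if_true]

end PrimeSpectrum

namespace WittVector

variable (p : ℕ) [hp : Fact p.Prime]

noncomputable abbrev frobeniusFixed (R : Type*) [CommRing R] : Subring (WittVector p R) :=
  RingHom.eqLocus frobenius (RingHom.id _)

variable {p} {R S : Type u} [CommRing R] [CommRing S]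

theorem map_frobenius (f : R →+* S) (x : WittVector p R) :
    map f (frobenius x) = frobenius (map f x) :=
  (frobenius_isPoly p).map f x

variable (p) in
noncomputable def frobeniusFixedMap (f : R →+* S) : frobeniusFixed p R →+* frobeniusFixed p S :=
  ((map f).comp (frobeniusFixed p R).subtype).codRestrict _ fun x =>
    (map_frobenius f x.1).symm.trans (congrArg (map f) x.2)

variable (p) in
theorem constantCoeff_frobeniusPolyAux (n : ℕ) :
    MvPolynomial.constantCoeff (frobeniusPolyAux p n) = 0 := by
  have h := coeff_frobenius (0 : WittVector p ℤ) n
  rw [map_zero, zero_coeff, show (0 : WittVector p ℤ).coeff = 0 from funext (zero_coeff p ℤ),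
    aeval_zero, frobeniusPoly] at h
  simpa [hp.out.ne_zero] using h.symm

theorem coeff_frobenius_mem_pow_succ {I : Ideal R} (hpI : (p : R) ∈ I) {k : ℕ} (hk : k ≠ 0)
    {x : WittVector p R} (hx : ∀ n, x.coeff n ∈ I ^ k) (n : ℕ) :
    (frobenius x).coeff n ∈ I ^ (k + 1) := by
  rw [coeff_frobenius, frobeniusPoly, map_add, map_mul, map_pow, aeval_X, aeval_C,
    algebraMap_int_eq, eq_intCast, Int.cast_natCast]
  refine Ideal.add_mem _
    (Ideal.pow_le_pow_right ?_ (pow_mul I k p ▸ Ideal.pow_mem_pow (hx n) p)) ?_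
  · have := hp.out.two_le
    nlinarith [Nat.pos_of_ne_zero hk]
  · rw [pow_succ']
    exact Ideal.mul_mem_mul hpI
      (aeval_mem_of_constantCoeff_eq_zero (constantCoeff_frobeniusPolyAux p n) hx)

theorem coeff_frobenius_iterate_mem_pow {I : Ideal R} (hpI : (p : R) ∈ I) {x : WittVector p R}
    (hx : ∀ n, x.coeff n ∈ I) (k n : ℕ) : (frobenius^[k] x).coeff n ∈ I ^ (k + 1) := by
  induction k generalizing n with
  | zero => simpa using hx n
  | succ k ih =>
    rw [Function.iterate_succ_apply']
    exact coeff_frobenius_mem_pow_succ hpI k.succ_ne_zero ih n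

theorem frobenius_iterate_eq_zero {I : Ideal R} (hpI : (p : R) ∈ I) {N : ℕ} (hN : I ^ N = ⊥)
    {x : WittVector p R} (hx : ∀ n, x.coeff n ∈ I) : frobenius^[N] x = 0 := by
  ext n
  rw [zero_coeff]
  have h := Ideal.pow_le_pow_right N.le_succ (coeff_frobenius_iterate_mem_pow hpI hx N n)
  rwa [hN, Ideal.mem_bot] at h

theorem frobeniusFixedMap_quotientMk_bijective {I : Ideal R} (hpI : (p : R) ∈ I)
    (hI : IsNilpotent I) : Function.Bijective (frobeniusFixedMap p (Ideal.Quotient.mk I)) := by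
  obtain ⟨N, hN⟩ := hI
  have coeff_mem {x : WittVector p R} (hx : map (Ideal.Quotient.mk I) x = 0) (n : ℕ) :
      x.coeff n ∈ I :=
    Ideal.Quotient.eq_zero_iff_mem.mp ((map_eq_zero_iff _).mp hx n)
  constructor
  · refine (injective_iff_map_eq_zero _).mpr fun x hx => Subtype.ext ?_
    rw [← Function.iterate_fixed x.2 N]
    exact frobenius_iterate_eq_zero hpI hN (coeff_mem (congrArg Subtype.val hx))
  · rintro ⟨y, hy⟩
    obtain ⟨x, rfl⟩ := map_surjective _ Ideal.Quotient.mk_surjective y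
    set d := frobenius x - x with hd_def
    have hd : map (Ideal.Quotient.mk I) d = 0 := by
      rw [map_sub, map_frobenius, sub_eq_zero]; exact hy
    have hFd : ∀ k, map (Ideal.Quotient.mk I) (frobenius^[k] d) = 0 := fun k => by
      induction k with
      | zero => exact hd
      | succ k ih => rw [Function.iterate_succ_apply', map_frobenius, ih, map_zero]
    set z := ∑ k ∈ Finset.range N, frobenius^[k] d
    have hz : frobenius z - z = -d := by
      rw [map_sum, ← Finset.sum_sub_distrib]
      simp_rw [← Function.iterate_succ_apply' frobenius]
      rw [Finset.sum_range_sub (fun k => frobenius^[k] d),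
        frobenius_iterate_eq_zero hpI hN (coeff_mem hd), Function.iterate_zero_apply, zero_sub]
    refine ⟨⟨x + z, ?_⟩, Subtype.ext ?_⟩
    · change frobenius (x + z) = x + z
      rw [map_add]
      linear_combination hz - hd_def
    · change map _ (x + z) = map _ x
      rw [map_add, map_sum, Finset.sum_eq_zero fun k _ => hFd k, add_zero]

noncomputable def frobeniusFixedEquivQuotient {I : Ideal R} (hpI : (p : R) ∈ I)
    (hI : IsNilpotent I) : frobeniusFixed p R ≃+* frobeniusFixed p (R ⧸ I) :=
  RingEquiv.ofBijective _ (frobeniusFixedMap_quotientMk_bijective hpI hI)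

theorem frobenius_eq_self_iff [CharP R p] {x : WittVector p R} :
    frobenius x = x ↔ ∀ n, x.coeff n ^ p = x.coeff n := by
  simp only [WittVector.ext_iff, coeff_frobenius_charP]

section Field

variable (K : Type u) [Field K] [CharP K p]

theorem exists_castHom_eq_of_pow_eq_self {a : K} (ha : a ^ p = a) :
    ∃ i : ZMod p, ZMod.castHom dvd_rfl K i = a := by
  rw [← Subfield.mem_bot_iff_pow_eq_self K p, ← ZMod.fieldRange_castHom_eq_bot p] at ha
  exact ha

theorem map_castHom_mem_frobeniusFixed (y : WittVector p (ZMod p)) :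
    map (ZMod.castHom dvd_rfl K) y ∈ frobeniusFixed p K :=
  frobenius_eq_self_iff.mpr fun n => by rw [map_coeff, ← map_pow, ZMod.pow_card]

noncomputable def zmodEquivFrobeniusFixed : WittVector p (ZMod p) ≃+* frobeniusFixed p K :=
  RingEquiv.ofBijective
    ((map (ZMod.castHom dvd_rfl K)).codRestrict _ (map_castHom_mem_frobeniusFixed K))
    ⟨fun y y' h => map_injective _ (ZMod.castHom dvd_rfl K).injective (congrArg Subtype.val h),
     fun x => by
      choose i hi using fun n =>
        exists_castHom_eq_of_pow_eq_self K (frobenius_eq_self_iff.mp x.2 n)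
      exact ⟨mk p i, Subtype.ext (ext fun n => hi n)⟩⟩

variable {K}

noncomputable def frobeniusFixedEval (f : S →+* K) :
    frobeniusFixed p S →+* WittVector p (ZMod p) :=
  (zmodEquivFrobeniusFixed K).symm.toRingHom.comp (frobeniusFixedMap p f)

theorem frobeniusFixedEval_eq_iff (f : S →+* K) {x : frobeniusFixed p S}
    {y : WittVector p (ZMod p)} :
    frobeniusFixedEval f x = y ↔ ∀ n, ZMod.castHom dvd_rfl K (y.coeff n) = f (x.1.coeff n) := by
  rw [frobeniusFixedEval, RingHom.comp_apply, RingEquiv.toRingHom_eq_coe,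
    RingEquiv.coe_toRingHom, RingEquiv.symm_apply_eq, Subtype.ext_iff, WittVector.ext_iff]
  exact forall_congr' fun n => eq_comm

end Field

theorem toZModPow_eq_iff {k : ℕ} {y y' : WittVector p (ZMod p)} :
    toZModPow p k y = toZModPow p k y' ↔ ∀ n < k, y.coeff n = y'.coeff n := by
  rw [toZModPow, RingHom.comp_apply, RingHom.comp_apply, RingEquiv.toRingHom_eq_coe,
    RingEquiv.coe_toRingHom, EquivLike.apply_eq_iff_eq, TruncatedWittVector.ext_iff,
    Fin.forall_iff]
  simp only [coeff_truncate]

theorem toZModPow_equiv (k : ℕ) (y : WittVector p (ZMod p)) :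
    PadicInt.toZModPow k (WittVector.equiv p y) = toZModPow p k y :=
  RingHom.congr_fun (PadicInt.lift_spec (toZModPow_compat p) k) y

theorem continuous_equiv_comp_iff {X : Type*} [TopologicalSpace X]
    {h : X → WittVector p (ZMod p)} :
    Continuous (fun x => WittVector.equiv p (h x)) ↔
      ∀ n, IsLocallyConstant fun x => (h x).coeff n := by
  simp_rw [PadicInt.continuous_iff_eventually_toZModPow_eq, toZModPow_equiv, toZModPow_eq_iff,
    IsLocallyConstant.iff_eventually_eq]
  refine ⟨fun H n x => ?_, fun H x k => ?_⟩
  · filter_upwards [H x (n + 1)] with y hy using hy n n.lt_succ_self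
  · exact (eventually_all_finite (Set.finite_lt_nat k)).mpr fun n _ => H n x

section CharP

variable (p S) [CharP S p]

noncomputable def frobeniusFixedToContinuousMap :
    frobeniusFixed p S →+* C(PrimeSpectrum S, ℤ_[p]) where
  toFun x :=
    ⟨fun 𝔭 => WittVector.equiv p (frobeniusFixedEval (algebraMap S 𝔭.asIdeal.ResidueField) x),
      continuous_equiv_comp_iff.mpr fun n => PrimeSpectrum.isLocallyConstant_of_castHom_eq fun 𝔭 =>
        (frobeniusFixedEval_eq_iff _).mp rfl n⟩
  map_one' := by ext; simp
  map_mul' _ _ := by ext; simp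
  map_zero' := by ext; simp
  map_add' _ _ := by ext; simp

theorem frobeniusFixedToContinuousMap_apply (x : frobeniusFixed p S) (𝔭 : PrimeSpectrum S) :
    frobeniusFixedToContinuousMap p S x 𝔭 =
      WittVector.equiv p (frobeniusFixedEval (algebraMap S 𝔭.asIdeal.ResidueField) x) :=
  rfl

theorem frobeniusFixedToContinuousMap_injective :
    Function.Injective (frobeniusFixedToContinuousMap p S) := by
  refine (injective_iff_map_eq_zero _).mpr fun x hx => Subtype.ext (ext fun n => ?_)
  rw [ZeroMemClass.coe_zero, zero_coeff]
  have hmem (𝔭 : PrimeSpectrum S) : x.1.coeff n ∈ 𝔭.asIdeal := by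
    have h0 : frobeniusFixedEval (algebraMap S 𝔭.asIdeal.ResidueField) x = 0 :=
      (WittVector.equiv p).injective (by rw [map_zero]; exact congr($hx 𝔭))
    rw [← Ideal.algebraMap_residueField_eq_zero, ← (frobeniusFixedEval_eq_iff _).mp h0 n,
      zero_coeff, map_zero]
  exact eq_zero_of_pow_eq_self_of_isNilpotent hp.out.one_lt (frobenius_eq_self_iff.mp x.2 n)
    (nilpotent_iff_mem_prime.mpr fun J hJ => hmem ⟨J, hJ⟩)

theorem frobeniusFixedToContinuousMap_surjective :
    Function.Surjective (frobeniusFixedToContinuousMap p S) := by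
  intro g
  have hc (n : ℕ) : IsLocallyConstant fun 𝔭 => ((WittVector.equiv p).symm (g 𝔭)).coeff n :=
    continuous_equiv_comp_iff.mp (by simpa using g.continuous) n
  choose a ha hca using fun n => PrimeSpectrum.exists_pow_eq_self_of_isLocallyConstant (hc n)
  refine ⟨⟨mk p a, frobenius_eq_self_iff.mpr ha⟩, ContinuousMap.ext fun 𝔭 => ?_⟩
  rw [frobeniusFixedToContinuousMap_apply, ← RingEquiv.eq_symm_apply, frobeniusFixedEval_eq_iff]
  exact fun n => hca n 𝔭

noncomputable def frobeniusFixedEquivContinuousMap :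
    frobeniusFixed p S ≃+* C(PrimeSpectrum S, ℤ_[p]) :=
  RingEquiv.ofBijective _
    ⟨frobeniusFixedToContinuousMap_injective p S, frobeniusFixedToContinuousMap_surjective p S⟩

end CharP

instance [Subsingleton R] : Subsingleton (WittVector p R) :=
  ⟨fun _ _ => ext fun _ => Subsingleton.elim _ _⟩

end WittVector

def Homeomorph.continuousMapRingEquiv {X Y A : Type*} [TopologicalSpace X] [TopologicalSpace Y]
    [TopologicalSpace A] [CommRing A] [IsTopologicalRing A] (h : X ≃ₜ Y) : C(Y, A) ≃+* C(X, A) :=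
  { (h.arrowCongr (.refl A)).symm.toEquiv with
    map_mul' := fun _ _ => rfl
    map_add' := fun _ _ => rfl }

theorem statement_5 (p : ℕ) [Fact p.Prime] (R : Type) [CommRing R]
    (hR : IsNilpotent (p : R)) :
    Nonempty
      ((RingHom.eqLocus (WittVector.frobenius : WittVector p R →+* WittVector p R)
          (RingHom.id (WittVector p R))) ≃+*
        C(PrimeSpectrum R, ℤ_[p])) := by
  rcases subsingleton_or_nontrivial R with hR₀ | hR₀
  · have : Subsingleton C(PrimeSpectrum R, ℤ_[p]) := ⟨fun f g => ContinuousMap.ext isEmptyElim⟩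
    let := uniqueOfSubsingleton (0 : WittVector.frobeniusFixed p R)
    let := uniqueOfSubsingleton (0 : C(PrimeSpectrum R, ℤ_[p]))
    exact ⟨RingEquiv.ofUnique⟩
  set I := Ideal.span {(p : R)}
  have hpI : (p : R) ∈ I := Ideal.mem_span_singleton_self _
  have hI : IsNilpotent I := by
    obtain ⟨N, hN⟩ := hR
    exact ⟨N, by rw [Ideal.span_singleton_pow, hN, Ideal.zero_eq_bot, Ideal.span_singleton_eq_bot]⟩
  have : CharP (R ⧸ I) p := CharP.quotient R p hR.not_isUnit
  have hSpec : PrimeSpectrum (R ⧸ I) ≃ₜ PrimeSpectrum R :=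
    (PrimeSpectrum.isHomeomorph_comap (Ideal.Quotient.mk I)
      (fun x => ⟨1, one_pos, by simpa using Ideal.Quotient.mk_surjective x⟩)
      (by rw [Ideal.mk_ker, Ideal.span_le, Set.singleton_subset_iff]; exact hR)).homeomorph
  exact ⟨(WittVector.frobeniusFixedEquivQuotient hpI hI).trans <|
    (WittVector.frobeniusFixedEquivContinuousMap p (R ⧸ I)).trans
      hSpec.symm.continuousMapRingEquiv⟩
end

section
/- Let (calS, I, S, σ, σ^div) be a frame and let M : P → P' be a morphism of finite projective (calS,I)-modules of the same height h and same dimension, represented with respect to free normal decompositions by a block matrix [[A, B],[C, D]] with A over calS, B over I, C, D over calS. Then σ(det M) = det Φ(M), where Φ(M) = [[σ(A), σ^div(B)],[p σ(C), σ(D)]]. -/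
open Polynomial Matrix

lemma block_smul_trade {R : Type*} [CommRing R] {d c : ℕ}
    (A : Matrix (Fin d) (Fin d) R) (B : Matrix (Fin d) (Fin c) R)
    (C : Matrix (Fin c) (Fin d) R) (D : Matrix (Fin c) (Fin c) R) (t : R) :
    (Matrix.fromBlocks A (t • B) C D).det = (Matrix.fromBlocks A B (t • C) D).det := by
  -- work in R[X]
  set f : R →+* R[X] := Polynomial.C with hf
  have hX : (Matrix.fromBlocks (A.map f) ((X : R[X]) • B.map f) (C.map f) (D.map f)).det
      = (Matrix.fromBlocks (A.map f) (B.map f) ((X : R[X]) • C.map f) (D.map f)).det := by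
    set E : Matrix (Fin d ⊕ Fin c) (Fin d ⊕ Fin c) R[X] :=
      Matrix.fromBlocks 1 0 0 ((X : R[X]) • 1) with hE
    have hdetE : E.det = (X : R[X]) ^ c := by
      simp [hE, Matrix.det_fromBlocks_zero₂₁, Matrix.det_smul]
    have hmul : E * Matrix.fromBlocks (A.map f) ((X : R[X]) • B.map f) (C.map f) (D.map f)
        = Matrix.fromBlocks (A.map f) (B.map f) ((X : R[X]) • C.map f) (D.map f) * E := by
      simp [hE, Matrix.fromBlocks_multiply, Matrix.smul_mul, Matrix.mul_smul (α := R[X]), smul_smul]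
    have := congrArg Matrix.det hmul
    rw [Matrix.det_mul, Matrix.det_mul, hdetE] at this
    have hreg := (Polynomial.isRegular_X_pow (R := R) c).left
    exact hreg (this.trans (mul_comm _ _))
  have := congrArg (Polynomial.evalRingHom t) hX
  rw [RingHom.map_det, RingHom.map_det, RingHom.mapMatrix_apply, RingHom.mapMatrix_apply] at this
  have hmapblock : ∀ (m n : ℕ) (M : Matrix (Fin m) (Fin n) R),
      (M.map f).map (Polynomial.evalRingHom t) = M := by
    intro m n M; ext i j; simp [hf]
  have hmapsmul : ∀ (m n : ℕ) (M : Matrix (Fin m) (Fin n) R),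
      (((X : R[X]) • M.map f)).map (Polynomial.evalRingHom t) = t • M := by
    intro m n M; ext i j; simp [hf, Matrix.smul_apply]; ring
  rw [Matrix.fromBlocks_map, Matrix.fromBlocks_map, hmapblock, hmapblock, hmapblock, hmapblock,
    hmapsmul, hmapsmul] at this
  exact this

theorem statement_9 (p : ℕ) (calS S : Type) [CommRing calS] [CommRing S]
    -- `S` is a quotient of `calS`:
    (π : calS →+* S) (hπ : Function.Surjective π)
    -- the frame data:
    (σ : calS →+* S)
    (I : Type) [AddCommGroup I] [Module calS I] (ι : I →ₗ[calS] calS)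
    (hι : ∀ x : I, ι x ∈ Ideal.jacobson (⊥ : Ideal calS))
    (σdiv : I →+ S)
    (hsl : ∀ (s : calS) (x : I), σdiv (s • x) = σ s * σdiv x)
    (hpσ : ∀ x : I, (p : S) * σdiv x = σ (ι x))
    -- a morphism of `(calS, I)`-modules of equal height and dimension,
    -- represented by a block matrix w.r.t. free normal decompositions:
    (d c : ℕ)
    (A : Matrix (Fin d) (Fin d) calS) (Bm : Matrix (Fin d) (Fin c) I)
    (Cm : Matrix (Fin c) (Fin d) calS) (D : Matrix (Fin c) (Fin c) calS) :
    σ ((Matrix.fromBlocks A (Bm.map ι) Cm D).det) =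
      (Matrix.fromBlocks (A.map σ) (Bm.map σdiv) ((p : S) • (Cm.map σ)) (D.map σ)).det := by
  rw [RingHom.map_det, RingHom.mapMatrix_apply, Matrix.fromBlocks_map]
  have hB : ((Bm.map ι).map σ) = (p : S) • (Bm.map σdiv) := by
    ext i j
    simp [Matrix.smul_apply, ← hpσ]
  rw [hB, block_smul_trade]
end

section
/- Let R be a commutative ring of characteristic p, e ≥ 1, and let B, C be square Witt-vector matrices over W(R) with C₀^(p^{e-1}) ⋯ C₀ = 0, and write F^{e-1}(C) ⋯ C = V(C'). Let A, Y be b×c matrices over W(R) satisfying V(Y) = F^{e+2}(B)·Y·F^{e+2}(C) + F(A). If X is a b×c matrix over W(R) satisfying V(X) = F^{e+1}(B)·X·F^{e+1}(C) + A and F(X) = Y, then V^e(X) = F^2(B) ⋯ F^{e+1}(B) · V(Y) · F(C') + Σ_{i=0}^{e-1} F^2(B) ⋯ F^{e-i}(B) · V^i(A) · F^{e-i}(C) ⋯ F^2(C). -/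
/-!
Substituting the recursion `V(X) = F^{e+1}(B) X F^{e+1}(C) + A` into itself, the identities
`V(F(x) y) = x V(y)` and `V(x F(y)) = V(x) y` move the accumulated Frobenius twists of `B` and `C`
out of each new `V`, so that `V^k(X) = F^s(B) ⋯ F^{s+k-1}(B) · X · F^{s+k-1}(C) ⋯ F^s(C) + Σ …`
whenever `s + k = e + 2`. At `k = e` the product of the `C`'s is `F²(V(C')) = V(F²(C'))`, as `V`
and `F` commute in characteristic `p`, and `X · V(F²(C')) = V(F(X)) · F(C') = V(Y) · F(C')`.
-/

section MatrixFrobeniusVerschiebung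

variable {p : ℕ} [Fact p.Prime] {R : Type} [CommRing R]

lemma Ve_Fr_mul (x y : WittVector p R) : Ve p (Fr p x * y) = x * Ve p y := by
  rw [mul_comm, Ve, Fr, WittVector.verschiebung_mul_frobenius, mul_comm]

lemma Ve_mul_Fr (x y : WittVector p R) : Ve p (x * Fr p y) = Ve p x * y :=
  WittVector.verschiebung_mul_frobenius x y

variable {l m n o : Type} [Fintype n]

lemma map_Ve_add (M N : Matrix m o (WittVector p R)) :
    (M + N).map (Ve p) = M.map (Ve p) + N.map (Ve p) :=
  Matrix.map_add _ (map_add WittVector.verschiebung) M N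

lemma map_Ve_sum {ι : Type} (s : Finset ι) (f : ι → Matrix m o (WittVector p R)) :
    (∑ i ∈ s, f i).map (Ve p) = ∑ i ∈ s, (f i).map (Ve p) :=
  map_sum (WittVector.verschiebung : WittVector p R →+ WittVector p R).mapMatrix f s

lemma map_Ve_map_Fr_mul (M : Matrix m n (WittVector p R)) (N : Matrix n o (WittVector p R)) :
    (M.map (Fr p) * N).map (Ve p) = M * N.map (Ve p) := by
  ext i j : 1
  exact (map_sum WittVector.verschiebung _ _).trans
    (Finset.sum_congr rfl fun k _ => Ve_Fr_mul (M i k) (N k j))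

lemma map_Ve_mul_map_Fr (M : Matrix m n (WittVector p R)) (N : Matrix n o (WittVector p R)) :
    (M * N.map (Fr p)).map (Ve p) = M.map (Ve p) * N := by
  ext i j : 1
  exact (map_sum WittVector.verschiebung _ _).trans
    (Finset.sum_congr rfl fun k _ => Ve_mul_Fr (M i k) (N k j))

lemma map_Ve_map_Fr_mul_mul_map_Fr [Fintype o] (M : Matrix m n (WittVector p R))
    (X : Matrix n o (WittVector p R)) (N : Matrix o l (WittVector p R)) :
    (M.map (Fr p) * X * N.map (Fr p)).map (Ve p) = M * X.map (Ve p) * N := by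
  rw [map_Ve_mul_map_Fr, map_Ve_map_Fr_mul]

lemma mul_map_Ve_map_Fr (X : Matrix m n (WittVector p R)) (N : Matrix n o (WittVector p R)) :
    X * (N.map (Fr p)).map (Ve p) = (X.map (Fr p)).map (Ve p) * N := by
  rw [← map_Ve_map_Fr_mul, map_Ve_mul_map_Fr]

lemma map_Fr_map_Ve [CharP R p] (M : Matrix m o (WittVector p R)) :
    (M.map (Ve p)).map (Fr p) = (M.map (Fr p)).map (Ve p) := by
  simp only [Matrix.map_map]
  exact congrArg M.map (WittVector.verschiebung_frobenius_comm (p := p) (R := R)).comp_eq.symm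

lemma map_Ve_iterate_succ (M : Matrix m o (WittVector p R)) (k : ℕ) :
    (M.map (Ve p)^[k]).map (Ve p) = M.map (Ve p)^[k + 1] := by
  rw [Matrix.map_map, Function.iterate_succ']

lemma map_Fr_iterate_succ (M : Matrix m o (WittVector p R)) (k : ℕ) :
    (M.map (Fr p)^[k]).map (Fr p) = M.map (Fr p)^[k + 1] := by
  rw [Matrix.map_map, Function.iterate_succ']

variable [DecidableEq n]

lemma map_Fr_list_prod (L : List (Matrix n n (WittVector p R))) :
    L.prod.map (Fr p) = (L.map fun M => M.map (Fr p)).prod :=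
  map_list_prod (WittVector.frobenius : WittVector p R →+* WittVector p R).mapMatrix L

noncomputable def frobProd (M : Matrix n n (WittVector p R)) (s k : ℕ) :
    Matrix n n (WittVector p R) :=
  (List.ofFn fun i : Fin k => M.map (Fr p)^[s + i]).prod

noncomputable def frobProdRev (M : Matrix n n (WittVector p R)) (s k : ℕ) :
    Matrix n n (WittVector p R) :=
  (List.ofFn fun i : Fin k => M.map (Fr p)^[s + (k - 1 - i)]).prod

variable (M : Matrix n n (WittVector p R))

@[simp]
lemma frobProd_zero (s : ℕ) : frobProd M s 0 = 1 := rfl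

@[simp]
lemma frobProdRev_zero (s : ℕ) : frobProdRev M s 0 = 1 := rfl

lemma frobProd_succ (s k : ℕ) :
    frobProd M s (k + 1) = frobProd M s k * M.map (Fr p)^[s + k] := by
  rw [frobProd, List.ofFn_succ', List.prod_concat]
  rfl

lemma frobProdRev_succ (s k : ℕ) :
    frobProdRev M s (k + 1) = M.map (Fr p)^[s + k] * frobProdRev M s k := by
  rw [frobProdRev, List.ofFn_succ, List.prod_cons, frobProdRev]
  congr 3
  funext i
  rw [Fin.val_succ, show k + 1 - 1 - (i + 1) = k - 1 - i by omega]

lemma map_Fr_frobProd (s k : ℕ) : (frobProd M s k).map (Fr p) = frobProd M (s + 1) k := by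
  rw [frobProd, map_Fr_list_prod, List.map_ofFn, frobProd]
  congr 2
  funext i
  rw [Function.comp_apply, map_Fr_iterate_succ, Nat.add_right_comm]

lemma map_Fr_frobProdRev (s k : ℕ) :
    (frobProdRev M s k).map (Fr p) = frobProdRev M (s + 1) k := by
  rw [frobProdRev, map_Fr_list_prod, List.map_ofFn, frobProdRev]
  congr 2
  funext i
  rw [Function.comp_apply, map_Fr_iterate_succ, Nat.add_right_comm]

variable {ι κ : Type} [Fintype ι] [DecidableEq ι] [Fintype κ] [DecidableEq κ]

theorem map_Ve_iterate_of_map_Ve_eq {N : ℕ} (B : Matrix ι ι (WittVector p R))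
    (C : Matrix κ κ (WittVector p R)) (A X : Matrix ι κ (WittVector p R))
    (hX : X.map (Ve p) = B.map (Fr p)^[N] * X * C.map (Fr p)^[N] + A) (k s : ℕ)
    (hks : s + k = N + 1) :
    X.map (Ve p)^[k] = frobProd B s k * X * frobProdRev C s k +
      ∑ i ∈ Finset.range k,
        frobProd B s (k - 1 - i) * A.map (Ve p)^[i] * frobProdRev C s (k - 1 - i) := by
  induction k generalizing s with
  | zero => simp
  | succ k ih =>
    have hsum : (∑ i ∈ Finset.range k, frobProd B (s + 1) (k - 1 - i) * A.map (Ve p)^[i] *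
          frobProdRev C (s + 1) (k - 1 - i)).map (Ve p) =
        ∑ i ∈ Finset.range k, frobProd B s (k - 1 - i) * A.map (Ve p)^[i + 1] *
          frobProdRev C s (k - 1 - i) := by
      rw [map_Ve_sum]
      refine Finset.sum_congr rfl fun i _ => ?_
      rw [← map_Fr_frobProd, ← map_Fr_frobProdRev, map_Ve_map_Fr_mul_mul_map_Fr,
        map_Ve_iterate_succ]
    rw [← map_Ve_iterate_succ, ih (s + 1) (by omega), map_Ve_add, hsum, ← map_Fr_frobProd,
      ← map_Fr_frobProdRev, map_Ve_map_Fr_mul_mul_map_Fr, hX, Finset.sum_range_succ',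
      frobProd_succ, frobProdRev_succ, show s + k = N by omega]
    simp only [Nat.add_sub_cancel, Nat.sub_zero, Nat.sub_sub, Nat.add_comm 1,
      Function.iterate_zero, Matrix.map_id]
    rw [Matrix.mul_add, Matrix.add_mul, add_assoc,
      add_comm (frobProd B s k * A * frobProdRev C s k)]
    simp only [Matrix.mul_assoc]

end MatrixFrobeniusVerschiebung

theorem statement_10_general (p : ℕ) [Fact p.Prime] (R : Type) [CommRing R] [CharP R p]
    (b c e : ℕ)
    (B : Matrix (Fin b) (Fin b) (WittVector p R))
    (C C' : Matrix (Fin c) (Fin c) (WittVector p R))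
    (A Y X : Matrix (Fin b) (Fin c) (WittVector p R))
    (hC' : (List.ofFn fun i : Fin e => C.map ((Fr p)^[e - 1 - (i : ℕ)])).prod = C'.map (Ve p))
    (hX : X.map (Ve p) =
      B.map ((Fr p)^[e + 1]) * X * C.map ((Fr p)^[e + 1]) + A)
    (hFX : X.map (Fr p) = Y) :
    X.map ((Ve p)^[e]) =
      (List.ofFn fun i : Fin e => B.map ((Fr p)^[(i : ℕ) + 2])).prod *
          (Y.map (Ve p)) * (C'.map (Fr p)) +
        ∑ i ∈ Finset.range e,
          (List.ofFn fun j : Fin (e - 1 - i) => B.map ((Fr p)^[(j : ℕ) + 2])).prod *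
            (A.map ((Ve p)^[i])) *
            (List.ofFn fun j : Fin (e - 1 - i) => C.map ((Fr p)^[e - i - (j : ℕ)])).prod := by
  have hB (k : ℕ) : (List.ofFn fun j : Fin k => B.map (Fr p)^[j + 2]).prod = frobProd B 2 k := by
    simp only [frobProd, Nat.add_comm 2]
  have hC (i : ℕ) (hi : i < e) :
      (List.ofFn fun j : Fin (e - 1 - i) => C.map (Fr p)^[e - i - j]).prod =
        frobProdRev C 2 (e - 1 - i) := by
    unfold frobProdRev
    congr 2
    funext j
    rw [show e - i - j = 2 + (e - 1 - i - 1 - j) by omega]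
  have hC'_frob : frobProdRev C 2 e = ((C'.map (Fr p)).map (Fr p)).map (Ve p) := by
    rw [← map_Fr_frobProdRev, ← zero_add 1, ← map_Fr_frobProdRev, frobProdRev]
    simp only [zero_add, hC', map_Fr_map_Ve]
  rw [map_Ve_iterate_of_map_Ve_eq B C A X hX e 2 (by omega), hC'_frob, Matrix.mul_assoc _ X,
    mul_map_Ve_map_Fr, hFX, ← Matrix.mul_assoc, hB]
  refine congrArg _ (Finset.sum_congr rfl fun i hi => ?_)
  rw [hB, hC i (Finset.mem_range.mp hi)]

theorem statement_10 (p : ℕ) [Fact p.Prime] (R : Type) [CommRing R] [CharP R p]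
    (b c e : ℕ) (he : 0 < e)
    (B : Matrix (Fin b) (Fin b) (WittVector p R))
    (C C' : Matrix (Fin c) (Fin c) (WittVector p R))
    (A Y X : Matrix (Fin b) (Fin c) (WittVector p R))
    (hC0 : (List.ofFn fun i : Fin e =>
        C.map fun x => (x.coeff 0) ^ p ^ (e - 1 - (i : ℕ))).prod = 0)
    (hC' : (List.ofFn fun i : Fin e => C.map ((Fr p)^[e - 1 - (i : ℕ)])).prod = C'.map (Ve p))
    (hY : Y.map (Ve p) =
      B.map ((Fr p)^[e + 2]) * Y * C.map ((Fr p)^[e + 2]) + A.map (Fr p))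
    (hX : X.map (Ve p) =
      B.map ((Fr p)^[e + 1]) * X * C.map ((Fr p)^[e + 1]) + A)
    (hFX : X.map (Fr p) = Y) :
    X.map ((Ve p)^[e]) =
      (List.ofFn fun i : Fin e => B.map ((Fr p)^[(i : ℕ) + 2])).prod *
          (Y.map (Ve p)) * (C'.map (Fr p)) +
        ∑ i ∈ Finset.range e,
          (List.ofFn fun j : Fin (e - 1 - i) => B.map ((Fr p)^[(j : ℕ) + 2])).prod *
            (A.map ((Ve p)^[i])) *
            (List.ofFn fun j : Fin (e - 1 - i) => C.map ((Fr p)^[e - i - (j : ℕ)])).prod :=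
  statement_10_general p R b c e B C C' A Y X hC' hX hFX
end

section
/- Let B be an admissible linearly topologized commutative ring such that for every ideal of definition I ⊆ B and every n ≥ 1 the closure of I^n in B is an open ideal. Then B is weakly adic; if moreover B arises as the limit of a tower of Noetherian rings B_i with surjective transition maps having nilpotent kernels and B₁ Noetherian, then B is a Noetherian adic ring. -/
/-!
Let `J` be the kernel of `B → C 0`. Since the transition maps have nilpotent kernels, the powers
of `J` tend to zero, so `J` is an ideal of definition and the closures `F n` of `J ^ n` are open.
They are cofinal with the kernels of `B → C k`, so `B = lim C k` is complete and separated for the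
filtration `F`. As `B ⧸ ker (B → C k) ≅ C k` is Noetherian, some finitely generated `I ≤ J`
satisfies `J ≤ I ⊔ F 2`; then `F n ≤ I ^ n ⊔ F (n + 1)` for every `n`, and successive
approximation gives `F n = I ^ n`. Thus `J = I` is finitely generated, `B` is `I`-adic, and `B` is
Noetherian: it is `I`-adically complete with `B ⧸ I ≅ C 0` Noetherian, and the initial forms of an
ideal `M` form an ideal of the Noetherian ring `(B ⧸ I)[X₁, …, Xᵣ]`, whose finitely many
generators lift to generators of `M`.
-/

open Filter Finset MvPolynomial Topology Pointwise

section Filtration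
variable {B : Type*} [CommRing B]

/-- Unlike `IsAdicComplete`, this allows filtrations that are not the powers of one ideal. -/
structure IsCompleteSeparated (F : ℕ → Ideal B) : Prop where
  antitone : Antitone F
  eq_zero_of_forall_mem : ∀ b, (∀ n, b ∈ F n) → b = 0
  exists_limit : ∀ a : ℕ → B, (∀ n, a (n + 1) - a n ∈ F n) → ∃ b, ∀ n, b - a n ∈ F n

lemma sub_mem_of_antitone_of_le {F : ℕ → Ideal B} (hF : Antitone F) {a : ℕ → B}
    (ha : ∀ n, a (n + 1) - a n ∈ F n) {m n : ℕ} (h : m ≤ n) : a n - a m ∈ F m := by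
  induction n, h using Nat.le_induction with
  | base => simp
  | succ n h ih =>
    rw [← sub_add_sub_cancel]
    exact add_mem (hF h (ha n)) ih

namespace IsCompleteSeparated
variable {F : ℕ → Ideal B}

lemma of_cofinal (hF : IsCompleteSeparated F) {G : ℕ → Ideal B} (hG : Antitone G)
    (hGF : ∀ n, ∃ m, G m ≤ F n) (hFG : ∀ n, ∃ m, F m ≤ G n) : IsCompleteSeparated G := by
  refine ⟨hG, fun b hb => hF.eq_zero_of_forall_mem b fun n => ?_, fun a ha => ?_⟩
  · obtain ⟨m, hm⟩ := hGF n
    exact hm (hb m)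
  obtain ⟨φ, hφ, hφF⟩ := extraction_forall_of_eventually' fun n =>
    ⟨(hGF n).choose, fun k hk => (hG hk).trans (hGF n).choose_spec⟩
  obtain ⟨b, hb⟩ := hF.exists_limit (a ∘ φ) fun k =>
    hφF k (sub_mem_of_antitone_of_le hG ha (hφ.monotone k.le_succ))
  refine ⟨b, fun n => ?_⟩
  obtain ⟨m, hm⟩ := hFG n
  rw [← sub_add_sub_cancel b (a (φ (max m n)))]
  exact add_mem (hm (hF.antitone (le_max_left m n) (hb _)))
    (sub_mem_of_antitone_of_le hG ha ((le_max_right m n).trans (hφ.id_le _)))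

lemma exists_sub_sum_mem (hF : IsCompleteSeparated F) {d : ℕ → B} (hd : ∀ k, d k ∈ F k) :
    ∃ b, ∀ K, b - ∑ k ∈ range K, d k ∈ F K :=
  hF.exists_limit _ fun n => by simpa [sum_range_succ] using hd n

/-- Successive approximation: the coefficients of the corrections made at step `k` lie in `F k`,
so their sums converge. -/
theorem le_of_le_mul_sup (hF : IsCompleteSeparated F) {N : Ideal B} (hN : N.FG)
    {S : ℕ → Ideal B} (hSF : ∀ k, S k ≤ F k) (hstep : ∀ k, S k ≤ F k * N ⊔ S (k + 1)) :
    S 0 ≤ N := by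
  obtain ⟨r, μ, rfl⟩ := Submodule.fg_iff_exists_fin_generating_family.1 hN
  have hstep' : ∀ k z, ∃ c : Fin r → B, (∀ i, c i ∈ F k) ∧
      (z ∈ S k → z - ∑ i, c i * μ i ∈ S (k + 1)) := by
    intro k z
    by_cases hz : z ∈ S k
    · obtain ⟨u, hu, v, hv, rfl⟩ := Submodule.mem_sup.1 (hstep k hz)
      rw [← Ideal.smul_eq_mul] at hu
      obtain ⟨c, hc, rfl⟩ := (Submodule.mem_ideal_smul_span_iff_exists_sum _ _ _).1 hu
      exact ⟨c, hc, fun _ => by simpa [Finsupp.sum_fintype] using hv⟩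
    · exact ⟨0, fun _ => zero_mem _, fun h => (hz h).elim⟩
  choose c hcF hcS using hstep'
  intro z hz
  let y : ℕ → B := fun k => Nat.rec z (fun k yk => yk - ∑ i, c k yk i * μ i) k
  have hyS : ∀ k, y k ∈ S k := fun k => by
    induction k with
    | zero => exact hz
    | succ k ih => exact hcS k (y k) ih
  have hy : ∀ K, y K = z - ∑ i, (∑ k ∈ range K, c k (y k) i) * μ i := by
    intro K
    induction K with
    | zero => simp [y]
    | succ K ih =>
      simp only [sum_range_succ, add_mul, sum_add_distrib]
      rw [← sub_sub, ← ih]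
  choose a ha using fun i => hF.exists_sub_sum_mem fun k => hcF k (y k) i
  have hlim : z - ∑ i, a i * μ i = 0 := hF.eq_zero_of_forall_mem _ fun K => by
    have : z - ∑ i, a i * μ i = y K - ∑ i, (a i - ∑ k ∈ range K, c k (y k) i) * μ i := by
      rw [hy K]; simp only [sub_mul, sum_sub_distrib]; ring
    rw [this]
    exact sub_mem (hSF K (hyS K)) (sum_mem fun i _ => Ideal.mul_mem_right _ _ (ha i K))
  rw [sub_eq_zero.1 hlim]
  exact sum_mem fun i _ => Ideal.mul_mem_left _ _ (Submodule.subset_span ⟨i, rfl⟩)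

end IsCompleteSeparated
end Filtration

namespace MvPolynomial
variable {σ R S ι : Type*} [CommRing R] [CommRing S]

attribute [local instance] gradedAlgebra in
lemma homogeneousComponent_mul_of_isHomogeneous (p : MvPolynomial σ R)
    {q : MvPolynomial σ R} {m : ℕ} (hq : q.IsHomogeneous m) (n : ℕ) :
    homogeneousComponent n (p * q) =
      if m ≤ n then homogeneousComponent (n - m) p * q else 0 := by
  have := DirectSum.coe_decompose_mul_of_right_mem (homogeneousSubmodule σ R) n (a := p)
    ((mem_homogeneousSubmodule m q).2 hq)
  rw [← decomposition.decompose'_apply, ← decomposition.decompose'_apply]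
  exact this

lemma exists_isHomogeneous_map_eq {f : R →+* S} (hf : Function.Surjective f)
    {p : MvPolynomial σ S} {n : ℕ} (hp : p.IsHomogeneous n) :
    ∃ q : MvPolynomial σ R, q.IsHomogeneous n ∧ map f q = p := by
  refine ⟨∑ v ∈ p.support, monomial v (Function.surjInv hf (p.coeff v)), ?_, ?_⟩
  · exact IsHomogeneous.sum _ _ _ fun v hv => isHomogeneous_monomial _
      (by rw [Finsupp.degree_eq_weight_one]; exact hp (mem_support_iff.1 hv))
  · simp only [map_sum, map_monomial, Function.surjInv_eq]
    exact p.support_sum_monomial_coeff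

lemma eval_mem_mul_pow_of_isHomogeneous (x : σ → R) {K : Ideal R} {p : MvPolynomial σ R}
    {n : ℕ} (hp : p.IsHomogeneous n) (hK : ∀ v, p.coeff v ∈ K) :
    eval x p ∈ K * Ideal.span (Set.range x) ^ n := by
  rw [p.as_sum, map_sum]
  refine Ideal.sum_mem _ fun v hv => ?_
  have hmon : eval x (monomial v (1 : R)) ∈ Ideal.span (Set.range x) ^ n :=
    (Ideal.mem_span_pow_iff_exists_isHomogeneous x _).2 ⟨_, isHomogeneous_monomial _
      (by rw [Finsupp.degree_eq_weight_one]; exact hp (mem_support_iff.1 hv)), rfl⟩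
  have : eval x (monomial v (p.coeff v)) = p.coeff v * eval x (monomial v 1) := by
    simp [eval_monomial]
  rw [this]
  exact Ideal.mul_mem_mul (hK v) hmon

variable [Fintype ι]

lemma exists_isHomogeneous_of_map_mem_span {f : R →+* S} (hf : Function.Surjective f)
    {e : ι → MvPolynomial σ R} {m : ι → ℕ} (he : ∀ i, (e i).IsHomogeneous (m i))
    {p : MvPolynomial σ R} {n : ℕ} (hp : p.IsHomogeneous n)
    (hpe : map f p ∈ Ideal.span (Set.range fun i => map f (e i))) :
    ∃ q : ι → MvPolynomial σ R, (∀ i, (q i).IsHomogeneous (n - m i)) ∧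
      (∀ i, n < m i → q i = 0) ∧ map f p = map f (∑ i, q i * e i) := by
  classical
  obtain ⟨r, hr⟩ := (Submodule.mem_span_range_iff_exists_fun _).1 hpe
  have hcomp : ∀ i, ∃ q : MvPolynomial σ R, q.IsHomogeneous (n - m i) ∧ (n < m i → q = 0) ∧
      map f (q * e i) = homogeneousComponent n (r i * map f (e i)) := by
    intro i
    rw [homogeneousComponent_mul_of_isHomogeneous _ ((he i).map f)]
    by_cases h : m i ≤ n
    · obtain ⟨q, hq, hqr⟩ :=
        exists_isHomogeneous_map_eq hf (homogeneousComponent_isHomogeneous (n - m i) (r i))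
      exact ⟨q, hq, fun h' => absurd h (not_le.2 h'), by rw [if_pos h, map_mul, hqr]⟩
    · exact ⟨0, isHomogeneous_zero _ _ _, fun _ => rfl, by rw [if_neg h, zero_mul, map_zero]⟩
  choose q hq hq0 hqe using hcomp
  refine ⟨q, hq, hq0, ?_⟩
  rw [← homogeneousComponent_eq_self (hp.map f), ← hr, map_sum, map_sum]
  simp only [smul_eq_mul, hqe]

/-- The reduction of `p` modulo `Ideal.span (Set.range x)` stands for the initial form of
`eval x p`. -/
lemma exists_eval_sub_sum_mem_pow_succ (x : σ → R) {e : ι → MvPolynomial σ R} {m : ι → ℕ}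
    (he : ∀ i, (e i).IsHomogeneous (m i)) {p : MvPolynomial σ R} {n : ℕ}
    (hp : p.IsHomogeneous n)
    (hpe : map (Ideal.Quotient.mk (Ideal.span (Set.range x))) p ∈
      Ideal.span (Set.range fun i => map (Ideal.Quotient.mk (Ideal.span (Set.range x))) (e i))) :
    ∃ c : ι → R, (∀ i, c i ∈ Ideal.span (Set.range x) ^ (n - m i)) ∧ (∀ i, n < m i → c i = 0) ∧
      eval x p - ∑ i, c i * eval x (e i) ∈ Ideal.span (Set.range x) ^ (n + 1) := by
  set I := Ideal.span (Set.range x)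
  obtain ⟨q, hq, hq0, hpq⟩ :=
    exists_isHomogeneous_of_map_mem_span Ideal.Quotient.mk_surjective he hp hpe
  refine ⟨fun i => eval x (q i), fun i => ?_, fun i h => by simp [hq0 i h], ?_⟩
  · simpa using eval_mem_mul_pow_of_isHomogeneous x (K := ⊤) (hq i) fun _ => trivial
  have hw : (p - ∑ i, q i * e i).IsHomogeneous n := by
    refine hp.sub (IsHomogeneous.sum _ _ _ fun i _ => ?_)
    by_cases h : m i ≤ n
    · simpa [Nat.sub_add_cancel h] using (hq i).mul (he i)
    · simpa [hq0 i (not_le.1 h)] using isHomogeneous_zero σ R n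
  have hcoeff : ∀ v, (p - ∑ i, q i * e i).coeff v ∈ I := fun v => by
    rw [← Ideal.Quotient.eq_zero_iff_mem, ← coeff_map, map_sub, hpq, sub_self, coeff_zero]
  have := eval_mem_mul_pow_of_isHomogeneous x hw hcoeff
  rw [← pow_succ'] at this
  simpa only [map_sub, map_sum, map_mul] using this

end MvPolynomial

section Noetherian
variable {B : Type*} [CommRing B]

lemma inf_pow_le_mul_sup_inf_pow_succ {σ ι : Type*} [Fintype ι] (x : σ → B) {M : Ideal B}
    {m : ι → ℕ} {e : ι → MvPolynomial σ B} (he : ∀ i, (e i).IsHomogeneous (m i)) {μ : ι → B}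
    (hμ : ∀ i, μ i ∈ M ∧ eval x (e i) - μ i ∈ Ideal.span (Set.range x) ^ (m i + 1))
    (hgen : ∀ n (p : MvPolynomial σ B), p.IsHomogeneous n → eval x p ∈ M →
      map (Ideal.Quotient.mk (Ideal.span (Set.range x))) p ∈
        Ideal.span (Set.range fun i => map (Ideal.Quotient.mk (Ideal.span (Set.range x))) (e i)))
    {n₀ : ℕ} (hn₀ : ∀ i, m i ≤ n₀) (n : ℕ) :
    M ⊓ Ideal.span (Set.range x) ^ n ≤ Ideal.span (Set.range x) ^ (n - n₀) *
      Ideal.span (Set.range μ) ⊔ M ⊓ Ideal.span (Set.range x) ^ (n + 1) := by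
  set I := Ideal.span (Set.range x)
  rintro z ⟨hzM, hzI⟩
  obtain ⟨p, hp, rfl⟩ := (Ideal.mem_span_pow_iff_exists_isHomogeneous x _).1 hzI
  obtain ⟨c, hc, hc0, hrem⟩ := exists_eval_sub_sum_mem_pow_succ x he hp (hgen n p hp hzM)
  have hu : ∑ i, c i * μ i ∈ I ^ (n - n₀) * Ideal.span (Set.range μ) :=
    Ideal.sum_mem _ fun i _ => Ideal.mul_mem_mul
      (Ideal.pow_le_pow_right (by have := hn₀ i; omega) (hc i)) (Ideal.subset_span ⟨i, rfl⟩)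
  have hv : eval x p - ∑ i, c i * μ i ∈ I ^ (n + 1) := by
    have : eval x p - ∑ i, c i * μ i =
        (eval x p - ∑ i, c i * eval x (e i)) + ∑ i, c i * (eval x (e i) - μ i) := by
      simp only [mul_sub, sum_sub_distrib]; ring
    refine this ▸ add_mem hrem (Ideal.sum_mem _ fun i _ => ?_)
    by_cases h : m i ≤ n
    · have hcμ := Ideal.mul_mem_mul (hc i) (hμ i).2
      rwa [← pow_add, show n - m i + (m i + 1) = n + 1 by omega] at hcμ
    · simp [hc0 i (not_le.1 h)]
  refine Submodule.mem_sup.2 ⟨_, hu, _, ⟨?_, hv⟩, add_sub_cancel _ _⟩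
  exact sub_mem hzM (Ideal.sum_mem _ fun i _ => Ideal.mul_mem_left _ _ (hμ i).1)

theorem isNoetherianRing_of_isCompleteSeparated_pow {I : Ideal B} (hI : I.FG)
    [IsNoetherianRing (B ⧸ I)] (hcs : IsCompleteSeparated (I ^ ·)) : IsNoetherianRing B := by
  obtain ⟨r, x, rfl⟩ := Submodule.fg_iff_exists_fin_generating_family.1 hI
  set I : Ideal B := Ideal.span (Set.range x)
  refine (isNoetherianRing_iff_ideal_fg B).2 fun M => ?_
  let π := MvPolynomial.map (σ := Fin r) (Ideal.Quotient.mk I)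
  -- `π '' E n` is the set of initial forms of degree `n` of the elements of `M`.
  let E : ℕ → Set (MvPolynomial (Fin r) B) :=
    fun n => {p | p.IsHomogeneous n ∧ eval x p ∈ M ⊔ I ^ (n + 1)}
  obtain ⟨T, hTE, hT⟩ := (Submodule.fg_span_iff_fg_span_finset_subset _).1
    (IsNoetherian.noetherian (Ideal.span (⋃ n, π '' E n)))
  have hTlift : ∀ t : T, ∃ m, ∃ e ∈ E m, π e = t := fun t => by simpa using hTE t.2
  choose m e he hπe using hTlift
  have hμ : ∀ t, ∃ μ, μ ∈ M ∧ eval x (e t) - μ ∈ I ^ (m t + 1) := fun t => by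
    obtain ⟨μ, hμ, δ, hδ, hμδ⟩ := Submodule.mem_sup.1 (he t).2
    exact ⟨μ, hμ, by rwa [← hμδ, add_sub_cancel_left]⟩
  choose μ hμ using hμ
  have hgen : ∀ n p, p.IsHomogeneous n → eval x p ∈ M →
      π p ∈ Ideal.span (Set.range fun t => π (e t)) := by
    intro n p hp hpM
    have hrange : Set.range (fun t => π (e t)) = (T : Set _) := by simp [hπe]
    rw [hrange, Ideal.span, ← hT]
    exact Ideal.subset_span (Set.mem_iUnion.2 ⟨n, p, ⟨hp, Submodule.mem_sup_left hpM⟩, rfl⟩)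
  set n₀ := univ.sup m
  -- The coefficients produced by the step lemma only lie in `I ^ (n - n₀)`.
  have hF : IsCompleteSeparated fun n => I ^ (n - n₀) :=
    hcs.of_cofinal (fun a b h => Ideal.pow_le_pow_right (by omega))
      (fun n => ⟨n + n₀, by rw [Nat.add_sub_cancel]⟩)
      (fun n => ⟨n, Ideal.pow_le_pow_right (by omega)⟩)
  have hMN : M ≤ Ideal.span (Set.range μ) := by
    simpa using hF.le_of_le_mul_sup (Submodule.fg_span (Set.finite_range μ))
      (S := fun n => M ⊓ I ^ n) (fun n => inf_le_right.trans (Ideal.pow_le_pow_right (by omega)))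
      (inf_pow_le_mul_sup_inf_pow_succ x (fun t => (he t).1) hμ hgen
        fun t => le_sup (mem_univ t))
  rw [le_antisymm hMN (Ideal.span_le.2 (Set.range_subset_iff.2 fun t => (hμ t).1))]
  exact Submodule.fg_span (Set.finite_range μ)

end Noetherian

section Tower
variable {C : ℕ → Type*} (g : ∀ k, C (k + 1) → C k)

def towerMap {m n : ℕ} (h : m ≤ n) : C n → C m :=
  @Nat.leRecOn (fun n => C n → C m) m n h (fun {k} φ => φ ∘ g k) id

lemma towerMap_self (m : ℕ) (y : C m) : towerMap g le_rfl y = y := by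
  simp only [towerMap, Nat.leRecOn_self, id]

lemma towerMap_succ {m n : ℕ} (h : m ≤ n) (y : C (n + 1)) :
    towerMap g (h.trans n.le_succ) y = towerMap g h (g n y) := by
  simp only [towerMap, Nat.leRecOn_succ h, Function.comp_apply]

lemma map_towerMap {m n : ℕ} (h : m + 1 ≤ n) (y : C n) :
    g m (towerMap g h y) = towerMap g (m.le_succ.trans h) y := by
  induction n, h using Nat.le_induction with
  | base => simp only [towerMap_succ g le_rfl, towerMap_self]
  | succ n h ih => rw [towerMap_succ g h, ih, towerMap_succ g (m.le_succ.trans h)]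

lemma exists_compatible_family (hg : ∀ k, Function.Surjective (g k)) (k : ℕ) (c : C k) :
    ∃ x : ∀ j, C j, (∀ j, g j (x (j + 1)) = x j) ∧ x k = c := by
  let up : ∀ i, C (k + i) := fun i => Nat.rec c (fun i y => Function.surjInv (hg (k + i)) y) i
  have hup : ∀ i, g (k + i) (up (i + 1)) = up i := fun i => Function.surjInv_eq _ _
  have hdown : ∀ i, towerMap g (Nat.le_add_right k i) (up i) = c := by
    intro i
    induction i with
    | zero => exact towerMap_self g k c
    | succ i ih => rw [towerMap_succ g (Nat.le_add_right k i), hup, ih]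
  refine ⟨fun j => towerMap g (Nat.le_add_left j k) (up j), fun j => ?_, hdown k⟩
  rw [map_towerMap g, towerMap_succ g (Nat.le_add_left j k), hup]

end Tower

section RingTower
variable {B : Type*} [CommRing B] {C : ℕ → Type*} [∀ k, CommRing (C k)]
  {g : ∀ k, C (k + 1) →+* C k} {f : ∀ k, B →+* C k}

lemma antitone_ker_of_comp_eq (hfg : ∀ k, (g k).comp (f (k + 1)) = f k) :
    Antitone fun k => RingHom.ker (f k) :=
  antitone_nat_of_succ_le fun k b hb => by
    rw [RingHom.mem_ker, ← hfg k, RingHom.comp_apply, RingHom.mem_ker.1 hb, map_zero]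

lemma isCompleteSeparated_ker (hfg : ∀ k, (g k).comp (f (k + 1)) = f k)
    (hinj : ∀ b, (∀ k, f k b = 0) → b = 0)
    (hlim : ∀ x : ∀ k, C k, (∀ k, g k (x (k + 1)) = x k) → ∃ b, ∀ k, f k b = x k) :
    IsCompleteSeparated fun k => RingHom.ker (f k) := by
  refine ⟨antitone_ker_of_comp_eq hfg, hinj, fun a ha => ?_⟩
  obtain ⟨b, hb⟩ := hlim (fun k => f k (a k)) fun k => by
    rw [← RingHom.comp_apply, hfg, ← sub_eq_zero, ← map_sub]
    exact ha k
  exact ⟨b, fun k => by rw [RingHom.mem_ker, map_sub, hb, sub_self]⟩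

lemma surjective_of_exists_lift (hg : ∀ k, Function.Surjective (g k))
    (hlim : ∀ x : ∀ k, C k, (∀ k, g k (x (k + 1)) = x k) → ∃ b, ∀ k, f k b = x k) (k : ℕ) :
    Function.Surjective (f k) := fun c => by
  obtain ⟨x, hx, rfl⟩ := exists_compatible_family (fun k => g k) hg k c
  obtain ⟨b, hb⟩ := hlim x hx
  exact ⟨b, hb k⟩

lemma exists_pow_ker_zero_le_ker (hfg : ∀ k, (g k).comp (f (k + 1)) = f k)
    (hnil : ∀ k, IsNilpotent (RingHom.ker (g k))) (k : ℕ) :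
    ∃ N, RingHom.ker (f 0) ^ N ≤ RingHom.ker (f k) := by
  induction k with
  | zero => exact ⟨1, by rw [pow_one]⟩
  | succ k ih =>
    obtain ⟨N, hN⟩ := ih
    obtain ⟨m, hm⟩ := hnil k
    have hmap : (RingHom.ker (f k)).map (f (k + 1)) ≤ RingHom.ker (g k) :=
      Ideal.map_le_iff_le_comap.2 fun b hb => by
        rw [Ideal.mem_comap, RingHom.mem_ker, ← RingHom.comp_apply, hfg, RingHom.mem_ker.1 hb]
    refine ⟨N * m, ?_⟩
    rw [pow_mul, RingHom.ker_eq_comap_bot (f (k + 1)), ← Ideal.map_le_iff_le_comap]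
    calc ((RingHom.ker (f 0) ^ N) ^ m).map (f (k + 1))
        ≤ ((RingHom.ker (f k)).map (f (k + 1))) ^ m := by
          rw [← Ideal.map_pow]; exact Ideal.map_mono (Ideal.pow_right_mono hN m)
      _ ≤ RingHom.ker (g k) ^ m := Ideal.pow_right_mono hmap m
      _ = ⊥ := hm

end RingTower

lemma Ideal.exists_fg_le_sup_of_isNoetherianRing_quotient {B : Type*} [CommRing B] (K : Ideal B)
    [IsNoetherianRing (B ⧸ K)] (J : Ideal B) : ∃ I ≤ J, I.FG ∧ J ≤ I ⊔ K := by
  classical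
  obtain ⟨s, hs⟩ := IsNoetherian.noetherian (J.map (Ideal.Quotient.mk K))
  have hsJ : (s : Set (B ⧸ K)) ⊆ Ideal.Quotient.mk K '' J := fun y hy =>
    Ideal.mem_image_of_mem_map_of_surjective _ Ideal.Quotient.mk_surjective
      (hs ▸ Submodule.subset_span hy)
  obtain ⟨t, htJ, rfl⟩ := Finset.subset_set_image_iff.1 hsJ
  refine ⟨Ideal.span t, Ideal.span_le.2 htJ, ⟨t, rfl⟩, fun z hz => ?_⟩
  have : Ideal.Quotient.mk K z ∈ (Ideal.span (t : Set B)).map (Ideal.Quotient.mk K) := by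
    rw [Ideal.map_span, ← Finset.coe_image, Ideal.span, hs]
    exact Ideal.mem_map_of_mem _ hz
  rwa [← Ideal.mem_comap, Ideal.comap_map_of_surjective _ Ideal.Quotient.mk_surjective,
    ← RingHom.ker_eq_comap_bot, Ideal.mk_ker] at this

section Topological
variable {B : Type*} [CommRing B] [TopologicalSpace B] [IsTopologicalRing B]

def IsIdealOfDefinition (I : Ideal B) : Prop :=
  IsOpen (I : Set B) ∧ ∀ s ∈ 𝓝 (0 : B), ∃ n, ((I ^ n : Ideal B) : Set B) ⊆ s

lemma Ideal.isClosed_of_isOpen {I : Ideal B} (hI : IsOpen (I : Set B)) : IsClosed (I : Set B) :=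
  AddSubgroup.isClosed_of_isOpen I.toAddSubgroup hI

lemma Ideal.closure_le_sup_of_isOpen (I : Ideal B) {U : Ideal B} (hU : IsOpen (U : Set B)) :
    I.closure ≤ I ⊔ U := by
  intro a ha
  have : a + 0 ∈ closure (I : Set B) + (U : Set B) := Set.add_mem_add ha U.zero_mem
  rw [hU.closure_add, add_zero] at this
  obtain ⟨b, hb, u, hu, rfl⟩ := this
  exact Submodule.add_mem_sup hb hu

lemma Ideal.closure_mul_closure_le (I J : Ideal B) : I.closure * J.closure ≤ (I * J).closure :=
  Ideal.mul_le.2 fun _ hr _ hs =>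
    map_mem_closure₂ continuous_mul hr hs fun _ ha _ hb => Ideal.mul_mem_mul ha hb

lemma exists_closure_pow_subset
    (hlin : ∀ s ∈ 𝓝 (0 : B), ∃ J : Ideal B, IsOpen (J : Set B) ∧ (J : Set B) ⊆ s)
    {I : Ideal B} (hI : ∀ s ∈ 𝓝 (0 : B), ∃ n, ((I ^ n : Ideal B) : Set B) ⊆ s) :
    ∀ s ∈ 𝓝 (0 : B), ∃ n, closure ((I ^ n : Ideal B) : Set B) ⊆ s := by
  intro s hs
  obtain ⟨J, hJ, hJs⟩ := hlin s hs
  obtain ⟨n, hn⟩ := hI J (hJ.mem_nhds J.zero_mem)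
  exact ⟨n, ((Ideal.isClosed_of_isOpen hJ).closure_subset_iff.2 hn).trans hJs⟩

theorem closure_pow_eq_pow {I J : Ideal B} (hopen : ∀ n, IsOpen ((J ^ n).closure : Set B))
    (hcs : IsCompleteSeparated fun n => (J ^ n).closure) (hI : I.FG) (hIJ : I ≤ J)
    (hJ : J ≤ I ⊔ (J ^ 2).closure) (n : ℕ) : (J ^ n).closure = I ^ n := by
  have hle : ∀ n, I ^ n ≤ (J ^ n).closure := fun n _ hx =>
    subset_closure (Ideal.pow_right_mono hIJ n hx)
  have hmul : ∀ a b c, c ≤ a + b → (J ^ a).closure * (J ^ b).closure ≤ (J ^ c).closure :=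
    fun a b c h => by
      have := hcs.antitone h
      rw [pow_add] at this
      exact (Ideal.closure_mul_closure_le _ _).trans this
  have hI1 : I ≤ (J ^ 1).closure := by simpa using hle 1
  have hJpow : ∀ m, J ^ m ≤ I ^ m ⊔ (J ^ (m + 1)).closure := by
    intro m
    induction m with
    | zero => simp
    | succ m ih =>
      calc J ^ (m + 1) = J * J ^ m := pow_succ' J m
        _ ≤ (I ⊔ (J ^ 2).closure) * (I ^ m ⊔ (J ^ (m + 1)).closure) := Ideal.mul_mono hJ ih
        _ ≤ I ^ (m + 1) ⊔ (J ^ (m + 2)).closure := by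
          rw [Ideal.sup_mul, Ideal.mul_sup, Ideal.mul_sup, ← pow_succ']
          refine sup_le (sup_le le_sup_left ?_) (sup_le ?_ ?_) <;> refine le_sup_of_le_right ?_
          · exact (Ideal.mul_mono_left hI1).trans (hmul _ _ _ (by omega))
          · exact (Ideal.mul_mono_right (hle m)).trans (hmul _ _ _ (by omega))
          · exact hmul _ _ _ (by omega)
  have hstep : ∀ m, (J ^ m).closure ≤ I ^ m ⊔ (J ^ (m + 1)).closure := fun m =>
    ((J ^ m).closure_le_sup_of_isOpen (hopen (m + 1))).trans (sup_le (hJpow m) le_sup_right)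
  refine le_antisymm ?_ (hle n)
  refine hcs.le_of_le_mul_sup (S := fun k => (J ^ (n + k)).closure) hI.pow
    (fun k => hcs.antitone (Nat.le_add_left k n)) fun k => (hstep (n + k)).trans ?_
  refine sup_le_sup_right ?_ _
  rw [pow_add, mul_comm]
  exact Ideal.mul_mono_left (hle k)

end Topological

theorem isNoetherianRing_and_isAdic_of_tower {B : Type*} [CommRing B] [TopologicalSpace B]
    [IsTopologicalRing B]
    (hclos : ∀ I : Ideal B, IsIdealOfDefinition I → ∀ n, IsOpen ((I ^ n).closure : Set B))
    {C : ℕ → Type*} [∀ k, CommRing (C k)] [∀ k, IsNoetherianRing (C k)]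
    {g : ∀ k, C (k + 1) →+* C k} (hg : ∀ k, Function.Surjective (g k))
    (hnil : ∀ k, IsNilpotent (RingHom.ker (g k)))
    {f : ∀ k, B →+* C k} (hfg : ∀ k, (g k).comp (f (k + 1)) = f k)
    (hinj : ∀ b, (∀ k, f k b = 0) → b = 0)
    (hlim : ∀ x : ∀ k, C k, (∀ k, g k (x (k + 1)) = x k) → ∃ b, ∀ k, f k b = x k)
    (hker_open : ∀ k, IsOpen (RingHom.ker (f k) : Set B))
    (hker_nhds : ∀ s ∈ 𝓝 (0 : B), ∃ k, (RingHom.ker (f k) : Set B) ⊆ s) :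
    IsNoetherianRing B ∧ ∃ I : Ideal B, IsAdic I := by
  have hquot : ∀ k, IsNoetherianRing (B ⧸ RingHom.ker (f k)) := fun k =>
    isNoetherianRing_of_ringEquiv _
      (RingHom.quotientKerEquivOfSurjective (surjective_of_exists_lift hg hlim k)).symm
  set J := RingHom.ker (f 0)
  have hJ : IsIdealOfDefinition J := ⟨hker_open 0, fun s hs => by
    obtain ⟨k, hk⟩ := hker_nhds s hs
    obtain ⟨N, hN⟩ := exists_pow_ker_zero_le_ker hfg hnil k
    exact ⟨N, (SetLike.coe_subset_coe.2 hN).trans hk⟩⟩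
  have hopen := hclos J hJ
  have hcs : IsCompleteSeparated fun n => (J ^ n).closure :=
    (isCompleteSeparated_ker hfg hinj hlim).of_cofinal
      (fun _ _ h => closure_mono (Ideal.pow_le_pow_right h))
      (fun k => (exists_pow_ker_zero_le_ker hfg hnil k).imp fun N hN =>
        (Ideal.isClosed_of_isOpen (hker_open k)).closure_subset_iff.2 hN)
      (fun n => hker_nhds _ ((hopen n).mem_nhds (zero_mem _)))
  obtain ⟨k, hk⟩ := hker_nhds _ ((hopen 2).mem_nhds (zero_mem _))
  obtain ⟨I, hIJ, hI, hJle⟩ := (RingHom.ker (f k)).exists_fg_le_sup_of_isNoetherianRing_quotient J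
  have hpow := closure_pow_eq_pow hopen hcs hI hIJ
    (hJle.trans (sup_le_sup_left (SetLike.coe_subset_coe.1 hk) _))
  have hJI : J = I := by
    simpa [Ideal.closure_eq_of_isClosed J (Ideal.isClosed_of_isOpen hJ.1)] using hpow 1
  have : IsNoetherianRing (B ⧸ I) := hJI ▸ hquot 0
  refine ⟨isNoetherianRing_of_isCompleteSeparated_pow hI (by simpa only [hpow] using hcs),
    I, isAdic_iff.2 ⟨fun n => hpow n ▸ hopen n, hJI ▸ hJ.2⟩⟩

theorem statement_16 (B : Type) [CommRing B] [TopologicalSpace B] [IsTopologicalRing B]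
    -- `B` is linearly topologized:
    (hlin : ∀ s ∈ nhds (0 : B), ∃ J : Ideal B, IsOpen (J : Set B) ∧ (J : Set B) ⊆ s)
    -- `B` has an ideal of definition:
    (hIoD : ∃ I : Ideal B, IsOpen (I : Set B) ∧
      ∀ s ∈ nhds (0 : B), ∃ n : ℕ, ((I ^ n : Ideal B) : Set B) ⊆ s)
    -- the closure of every power of every ideal of definition is open:
    (hclos : ∀ I : Ideal B, IsOpen (I : Set B) →
      (∀ s ∈ nhds (0 : B), ∃ n : ℕ, ((I ^ n : Ideal B) : Set B) ⊆ s) →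
      ∀ n : ℕ, IsOpen (closure ((I ^ n : Ideal B) : Set B))) :
    -- `B` is weakly adic:
    (∃ I : Ideal B, IsOpen (I : Set B) ∧
      (∀ n : ℕ, IsOpen (closure ((I ^ n : Ideal B) : Set B))) ∧
      ∀ s ∈ nhds (0 : B), ∃ n : ℕ, closure ((I ^ n : Ideal B) : Set B) ⊆ s) ∧
    -- if moreover `B` is the limit of a tower of Noetherian rings with surjective
    -- transition maps having nilpotent kernels, then `B` is a Noetherian adic ring:
    (∀ (C : ℕ → Type) (_ : ∀ k, CommRing (C k)),
      (∀ k, IsNoetherianRing (C k)) →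
      ∀ (g : ∀ k, C (k + 1) →+* C k),
      (∀ k, Function.Surjective (g k)) →
      (∀ k, IsNilpotent (RingHom.ker (g k))) →
      ∀ (f : ∀ k, B →+* C k) (hcompat : ∀ k, (g k).comp (f (k + 1)) = f k),
      Function.Bijective (fun b : B =>
        (⟨fun k => f k b, fun k => DFunLike.congr_fun (hcompat k) b⟩ :
          {x : ∀ k, C k // ∀ k, g k (x (k + 1)) = x k})) →
      (∀ k, IsOpen ((RingHom.ker (f k) : Ideal B) : Set B)) →
      (∀ s ∈ nhds (0 : B), ∃ k, ((RingHom.ker (f k) : Ideal B) : Set B) ⊆ s) →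
      IsNoetherianRing B ∧ ∃ I : Ideal B, IsAdic I) := by
  refine ⟨?_, fun C _ hC g hg hnil f hfg hbij hker_open hker_nhds => ?_⟩
  · obtain ⟨I, hIopen, hIpow⟩ := hIoD
    exact ⟨I, hIopen, hclos I hIopen hIpow, exists_closure_pow_subset hlin hIpow⟩
  have hinj : ∀ b, (∀ k, f k b = 0) → b = 0 := fun b hb =>
    hbij.1 (Subtype.ext (funext fun k => (hb k).trans (map_zero (f k)).symm))
  have hlim : ∀ x : ∀ k, C k, (∀ k, g k (x (k + 1)) = x k) → ∃ b, ∀ k, f k b = x k :=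
    fun x hx => (hbij.2 ⟨x, hx⟩).imp fun b hb => congrFun (congrArg Subtype.val hb)
  exact isNoetherianRing_and_isAdic_of_tower (fun I hI => hclos I hI.1 hI.2) hg hnil hfg hinj
    hlim hker_open hker_nhds
end
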